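/- arXiv:2205.07064 — 4 statements merged into one kernel-verified Lean document; each statement's English description precedes it below -/
import Mathlib

section
/- Let S be a good semigroup and let E be a good semigroup ideal of S with γ_E = γ_S. If E − E is a symmetric good semigroup, then E − E = K_S^0 − E. -/
/-! Combinatorics of good semigroups in `ℤ^I` (value semigroups of curve
singularities), following Korell–Schulze–Tozzo. -/

section GoodSemigroups

variable {I : Type*} [Fintype I] [Nonempty I]

/-- Property (E0): `E` contains a translate of `ℕ^I`, i.e. an upper cone. -/
def propE0 (E : Set (I → ℤ)) : Prop :=
  ∃ α : I → ℤ, ∀ β : I → ℤ, α ≤ β → β ∈ E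

/-- Property (E1): closure under componentwise minima. -/
def propE1 (E : Set (I → ℤ)) : Prop :=
  ∀ α ∈ E, ∀ β ∈ E, (fun i => min (α i) (β i)) ∈ E

/-- Property (E2). -/
def propE2 (E : Set (I → ℤ)) : Prop :=
  ∀ α ∈ E, ∀ β ∈ E, ∀ j : I, α j = β j →
    ∃ ε ∈ E, α j < ε j ∧
      ∀ i : I, min (α i) (β i) ≤ ε i ∧ (α i ≠ β i → ε i = min (α i) (β i))

/-- A good semigroup: a submonoid of `ℤ^I` whose unique minimal element is `0`
(equivalently all elements are `≥ 0`) satisfying (E0), (E1) and (E2). -/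
def IsGoodSemigroup (S : Set (I → ℤ)) : Prop :=
  (0 : I → ℤ) ∈ S ∧ (∀ α ∈ S, ∀ β ∈ S, α + β ∈ S) ∧ (∀ α ∈ S, 0 ≤ α) ∧
    propE0 S ∧ propE1 S ∧ propE2 S

/-- The difference `E − F = {α : α + F ⊆ E}`. -/
def sgDiff (E F : Set (I → ℤ)) : Set (I → ℤ) :=
  {α | ∀ β ∈ F, α + β ∈ E}

/-- A semigroup ideal of a good semigroup `S`. -/
def IsSgIdeal (S E : Set (I → ℤ)) : Prop :=
  E.Nonempty ∧ (∀ α ∈ E, ∀ β ∈ S, α + β ∈ E) ∧ ∃ α ∈ S, ∀ β ∈ E, α + β ∈ S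

/-- A good semigroup ideal of `S`: a semigroup ideal satisfying (E1) and (E2). -/
def IsGoodIdeal (S E : Set (I → ℤ)) : Prop :=
  IsSgIdeal S E ∧ propE1 E ∧ propE2 E

/-- The (componentwise) minimal element `μ_E` of a good semigroup ideal. -/
noncomputable def sgMu (E : Set (I → ℤ)) : I → ℤ :=
  fun i => sInf {n : ℤ | ∃ α ∈ E, α i = n}

/-- The conductor ideal `C_E = E − ℕ^I`. -/
def sgCond (E : Set (I → ℤ)) : Set (I → ℤ) :=
  sgDiff E {β | 0 ≤ β}

/-- The conductor `γ_E = μ_{C_E} = inf {α : α + ℕ^I ⊆ E}`. -/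
noncomputable def sgGamma (E : Set (I → ℤ)) : I → ℤ :=
  sgMu (sgCond E)

/-- `τ_E = γ_E − 1`. -/
noncomputable def sgTau (E : Set (I → ℤ)) : I → ℤ :=
  sgGamma E - 1

/-- `Δ(α) = ⋃ i Δ_i(α)` where `Δ_i(α) = {β : β i = α i, β j > α j (j ≠ i)}`. -/
def sgDelta (α : I → ℤ) : Set (I → ℤ) :=
  ⋃ i : I, {β | β i = α i ∧ ∀ j : I, j ≠ i → α j < β j}

/-- The closed version `Δ̄(α)`. -/
def sgDeltaBar (α : I → ℤ) : Set (I → ℤ) :=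
  ⋃ i : I, {β | β i = α i ∧ ∀ j : I, j ≠ i → α j ≤ β j}

/-- A canonical ideal of `S`: a good semigroup ideal `K` such that any good
semigroup ideal `E` with `γ_E = γ_K` containing `K` equals `K`. -/
def IsCanonicalIdeal (S K : Set (I → ℤ)) : Prop :=
  IsGoodIdeal S K ∧
    ∀ E : Set (I → ℤ), IsGoodIdeal S E → sgGamma E = sgGamma K → K ⊆ E → E = K

/-- The normalized canonical ideal `K_S^0`. -/
noncomputable def sgK0 (S : Set (I → ℤ)) : Set (I → ℤ) :=
  {α | sgDelta (sgTau S - α) ∩ S = ∅}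

/-- A good semigroup is symmetric if it is a canonical ideal of itself. -/
def IsSymmetricSg (S : Set (I → ℤ)) : Prop :=
  IsGoodSemigroup S ∧ IsCanonicalIdeal S S

/-- A good semigroup is local if `0` is its only element with a zero coordinate. -/
def IsLocalSg (S : Set (I → ℤ)) : Prop :=
  ∀ α ∈ S, (∃ i : I, α i = 0) → α = 0

/-- A good semigroup ideal `E` is stable if `μ_E + (E − E) = E`. -/
noncomputable def IsStableSgIdeal (E : Set (I → ℤ)) : Prop :=
  (fun β => sgMu E + β) '' sgDiff E E = E

end GoodSemigroups

/-! ### Auxiliary machinery -/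

set_option linter.unusedSectionVars false
set_option maxHeartbeats 1000000

section Auxiliary

variable {I : Type*} [Fintype I] [Nonempty I]

/-- Auxiliary: `Δ(v) ∩ T = ∅` reformulated positively. -/
def DFree (T : Set (I → ℤ)) (v : I → ℤ) : Prop :=
  ∀ x ∈ T, ∀ i : I, x i = v i → ∃ k, k ≠ i ∧ x k ≤ v k

lemma dfree_iff (T : Set (I → ℤ)) (v : I → ℤ) :
    sgDelta v ∩ T = ∅ ↔ DFree T v := by
  rw [Set.eq_empty_iff_forall_notMem]
  constructor
  · intro h x hx i hxi
    by_contra hno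
    push_neg at hno
    exact h x ⟨Set.mem_iUnion.2 ⟨i, hxi, fun k hk => hno k hk⟩, hx⟩
  · rintro h x ⟨hxd, hxT⟩
    obtain ⟨i, hxi, hgt⟩ := Set.mem_iUnion.1 hxd
    obtain ⟨k, hk, hle⟩ := h x hxT i hxi
    exact absurd (hgt k hk) (not_lt.2 hle)

/-- (E1) for `{w | Δ(θ-w) ∩ T = ∅}`. -/
lemma KE1 (T : Set (I → ℤ)) (θ : I → ℤ) :
    propE1 {w : I → ℤ | DFree T (θ - w)} := by
  intro u hu v hv x hx i hxi
  have hxi' : x i = θ i - min (u i) (v i) := hxi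
  rcases le_total (u i) (v i) with h | h
  · obtain ⟨k, hk, hle⟩ := hu x hx i (by rw [Pi.sub_apply]; rw [hxi', min_eq_left h])
    refine ⟨k, hk, ?_⟩
    have h2 : θ k - u k ≤ θ k - min (u k) (v k) := by
      have := min_le_left (u k) (v k); omega
    have hle' : x k ≤ θ k - u k := hle
    show x k ≤ θ k - min (u k) (v k)
    omega
  · obtain ⟨k, hk, hle⟩ := hv x hx i (by rw [Pi.sub_apply]; rw [hxi', min_eq_right h])
    refine ⟨k, hk, ?_⟩
    have h2 : θ k - v k ≤ θ k - min (u k) (v k) := by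
      have := min_le_right (u k) (v k); omega
    have hle' : x k ≤ θ k - v k := hle
    show x k ≤ θ k - min (u k) (v k)
    omega

/-- Master combinatorial lemma: level selection for freezing coordinate `i`. -/
lemma master (T : Set (I → ℤ)) (hT2 : propE2 T) (lb : I → ℤ)
    (hlb : ∀ β ∈ T, ∀ k, lb k ≤ β k) (i : I) :
    ∀ (n : ℕ) (A : Finset I), A.card ≤ n → i ∉ A → ∀ y : I → ℤ,
      (∀ β ∈ T, β i = y i → (∀ k, k ≠ i → k ∉ A → y k < β k) → ∃ a ∈ A, β a ≤ y a) →
      ∃ ℓ : I → ℤ, (∀ k, ℓ k ≤ y k) ∧ (∀ k, k ∉ A → ℓ k = y k) ∧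
        (∀ β ∈ T, β i = y i → ∃ k, k ≠ i ∧ β k ≤ ℓ k) ∧
        (∀ a ∈ A, ∀ σ ∈ T, σ a = ℓ a → y i < σ i → ∃ k, k ≠ i ∧ k ≠ a ∧ σ k ≤ ℓ k) := by
  classical
  intro n
  induction n with
  | zero =>
    intro A hA hiA y hHyp
    have hAe : A = ∅ := Finset.card_eq_zero.mp (Nat.le_zero.mp hA)
    subst hAe
    refine ⟨y, fun k => le_refl _, fun k _ => rfl, ?_, ?_⟩
    · intro β hβ hβi
      by_contra hc
      push_neg at hc
      obtain ⟨a, ha, _⟩ := hHyp β hβ hβi (fun k hk _ => hc k hk)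
      exact absurd ha (Finset.notMem_empty a)
    · intro a ha
      exact absurd ha (Finset.notMem_empty a)
  | succ n IHn =>
    intro A hA hiA y hHyp
    rcases A.eq_empty_or_nonempty with rfl | ⟨j', hj'⟩
    · refine ⟨y, fun k => le_refl _, fun k _ => rfl, ?_, ?_⟩
      · intro β hβ hβi
        by_contra hc
        push_neg at hc
        obtain ⟨a, ha, _⟩ := hHyp β hβ hβi (fun k hk _ => hc k hk)
        exact absurd ha (Finset.notMem_empty a)
      · intro a ha
        exact absurd ha (Finset.notMem_empty a)
    · set A' := A.erase j' with hA'def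
      have hiA' : i ∉ A' := fun h => hiA (Finset.mem_of_mem_erase h)
      have hij' : i ≠ j' := by rintro rfl; exact hiA hj'
      have hcard : A'.card ≤ n := by
        rw [hA'def, Finset.card_erase_of_mem hj']; omega
      have hj'A' : j' ∉ A' := Finset.notMem_erase j' A
      -- one descent step
      have STEP : ∀ c : ℤ, c ≤ y j' →
          (∀ β ∈ T, β i = y i →
            (∀ k, k ≠ i → k ∉ A' → (if k = j' then c else y k) < β k) → ∃ a ∈ A', β a ≤ y a) →
          (∃ ℓ : I → ℤ, (∀ k, ℓ k ≤ y k) ∧ (∀ k, k ∉ A → ℓ k = y k) ∧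
            (∀ β ∈ T, β i = y i → ∃ k, k ≠ i ∧ β k ≤ ℓ k) ∧
            (∀ a ∈ A, ∀ σ ∈ T, σ a = ℓ a → y i < σ i → ∃ k, k ≠ i ∧ k ≠ a ∧ σ k ≤ ℓ k)) ∨
          ((∃ σ ∈ T, σ j' = c) ∧
           (∀ β ∈ T, β i = y i →
            (∀ k, k ≠ i → k ∉ A' → (if k = j' then c - 1 else y k) < β k) → ∃ a ∈ A', β a ≤ y a)) := by
        intro c hcy Hc
        set y' : I → ℤ := fun k => if k = j' then c else y k with hy'def
        have hy'i : y' i = y i := by simp [hy'def, hij']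
        have hy'A' : ∀ a ∈ A', y' a = y a := by
          intro a ha
          have : a ≠ j' := Finset.ne_of_mem_erase ha
          simp [hy'def, this]
        obtain ⟨ℓ, hl1, hl2, hCUT, hDODGE⟩ := IHn A' hcard hiA' y' (by
          intro β hβ hβi hgate
          obtain ⟨a, ha, hle⟩ := Hc β hβ (by rw [← hy'i]; exact hβi) hgate
          exact ⟨a, ha, by rw [hy'A' a ha]; exact hle⟩)
        have hlj' : ℓ j' = c := by
          rw [hl2 j' hj'A', hy'def]; simp
        by_cases hcheck : ∃ σ ∈ T, σ j' = c ∧ y i < σ i ∧ ∀ k, k ≠ i → k ≠ j' → ℓ k < σ k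
        · right
          obtain ⟨σ, hσT, hσj, hσi, hσk⟩ := hcheck
          refine ⟨⟨σ, hσT, hσj⟩, ?_⟩
          intro β hβ hβi hgate
          by_contra hno
          push_neg at hno
          have hβj' : c ≤ β j' := by
            have := hgate j' (Ne.symm hij') hj'A'
            simp at this; omega
          rcases lt_or_eq_of_le hβj' with hlt | heq
          · obtain ⟨a, ha, hle⟩ := Hc β hβ hβi (by
              intro k hk hkA'
              by_cases hkj : k = j'
              · subst hkj; simpa using hlt
              · have := hgate k hk hkA'; simpa [hkj] using this)
            exact absurd hle (not_le.2 (hno a ha))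
          · obtain ⟨η, hηT, hηgt, hηmin⟩ := hT2 β hβ σ hσT j' (by rw [← heq, hσj])
            have hβiσ : β i ≠ σ i := by rw [hβi]; exact ne_of_lt hσi
            have hηi : η i = y i := by
              have h2 := (hηmin i).2 hβiσ
              rw [h2, hβi]; exact min_eq_left (le_of_lt hσi)
            obtain ⟨k, hk, hkle⟩ := hCUT η hηT (by rw [hηi, hy'i])
            have hcon : ℓ k < η k := by
              by_cases hkj : k = j'
              · subst hkj
                rw [hlj']
                omega
              · have hmink : min (β k) (σ k) ≤ η k := (hηmin k).1
                by_cases hkA : k ∈ A'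
                · have h1 : y k < β k := hno k hkA
                  have h2 : ℓ k < σ k := hσk k hk hkj
                  have h3 : ℓ k ≤ y k := by
                    have := hl1 k; rw [hy'A' k hkA] at this; exact this
                  have h4 : ℓ k < min (β k) (σ k) := lt_min (by omega) h2
                  omega
                · have h1 : y k < β k := by
                    have := hgate k hk hkA; simpa [hkj] using this
                  have h2 : ℓ k < σ k := hσk k hk hkj
                  have h3 : ℓ k = y k := by
                    rw [hl2 k hkA, hy'def]; simp [hkj]
                  have h4 : ℓ k < min (β k) (σ k) := lt_min (by omega) h2
                  omega
            exact absurd hkle (not_le.2 hcon)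
        · left
          refine ⟨ℓ, ?_, ?_, ?_, ?_⟩
          · intro k
            refine le_trans (hl1 k) ?_
            by_cases hkj : k = j'
            · subst hkj; simp [hy'def]; exact hcy
            · simp [hy'def, hkj]
          · intro k hkA
            have hkA' : k ∉ A' := fun h => hkA (Finset.mem_of_mem_erase h)
            have hkj : k ≠ j' := fun h => hkA (h ▸ hj')
            rw [hl2 k hkA', hy'def]; simp [hkj]
          · intro β hβ hβi
            exact hCUT β hβ (by rw [hy'i]; exact hβi)
          · intro a ha σ hσT hσa hσi
            by_cases haj : a = j'
            · subst haj
              by_contra hno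
              push_neg at hno
              exact hcheck ⟨σ, hσT, by rw [← hlj']; exact hσa, hσi, fun k hk hkj => hno k hk hkj⟩
            · have haA' : a ∈ A' := Finset.mem_erase.2 ⟨haj, ha⟩
              exact hDODGE a haA' σ hσT hσa (by rw [hy'i]; exact hσi)
      -- descending scan
      have SCAN : ∀ (N : ℕ) (c : ℤ), c ≤ y j' → c < lb j' + N →
          (∀ β ∈ T, β i = y i →
            (∀ k, k ≠ i → k ∉ A' → (if k = j' then c else y k) < β k) → ∃ a ∈ A', β a ≤ y a) →
          ∃ ℓ : I → ℤ, (∀ k, ℓ k ≤ y k) ∧ (∀ k, k ∉ A → ℓ k = y k) ∧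
            (∀ β ∈ T, β i = y i → ∃ k, k ≠ i ∧ β k ≤ ℓ k) ∧
            (∀ a ∈ A, ∀ σ ∈ T, σ a = ℓ a → y i < σ i → ∃ k, k ≠ i ∧ k ≠ a ∧ σ k ≤ ℓ k) := by
        intro N
        induction N with
        | zero =>
          intro c hcy hclt Hc
          rcases STEP c hcy Hc with h | ⟨⟨σ, hσT, hσj⟩, _⟩
          · exact h
          · have := hlb σ hσT j'
            rw [hσj] at this
            simp at hclt
            omega
        | succ N IHN =>
          intro c hcy hclt Hc
          rcases STEP c hcy Hc with h | ⟨_, Hc1⟩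
          · exact h
          · exact IHN (c - 1) (by omega) (by push_cast at hclt ⊢; omega) Hc1
      -- start the scan at c = y j'
      refine SCAN (max 0 (y j' + 1 - lb j')).toNat (y j') le_rfl ?_ ?_
      · have h1 : (max 0 (y j' + 1 - lb j') : ℤ) ≤ ((max 0 (y j' + 1 - lb j')).toNat : ℤ) :=
          Int.self_le_toNat _
        have h2 : y j' + 1 - lb j' ≤ max 0 (y j' + 1 - lb j') := le_max_right _ _
        omega
      · intro β hβ hβi hgate
        have hgate' : ∀ k, k ≠ i → k ∉ A → y k < β k := by
          intro k hk hkA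
          have hkA' : k ∉ A' := fun h => hkA (Finset.mem_of_mem_erase h)
          have := hgate k hk hkA'
          by_cases hkj : k = j' <;> simpa [hkj] using this
        obtain ⟨a, ha, hle⟩ := hHyp β hβ hβi hgate'
        have haj : a ≠ j' := by
          rintro rfl
          have := hgate a (Ne.symm hij') hj'A'
          simp at this
          omega
        exact ⟨a, Finset.mem_erase.2 ⟨haj, ha⟩, hle⟩

/-- coordinatewise attainment of `sgMu`. -/
lemma sgMu_att (T : Set (I → ℤ)) (hne : T.Nonempty) (lb : I → ℤ)
    (hlb : ∀ t ∈ T, ∀ k, lb k ≤ t k) (i : I) :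
    ∃ w ∈ T, w i = sgMu T i := by
  have hbdd : BddBelow {n : ℤ | ∃ α ∈ T, α i = n} :=
    ⟨lb i, by rintro n ⟨α, hα, rfl⟩; exact hlb α hα i⟩
  have hnei : {n : ℤ | ∃ α ∈ T, α i = n}.Nonempty :=
    ⟨hne.choose i, hne.choose, hne.choose_spec, rfl⟩
  exact Int.csInf_mem hnei hbdd

lemma sgMu_le (T : Set (I → ℤ)) (lb : I → ℤ)
    (hlb : ∀ t ∈ T, ∀ k, lb k ≤ t k) :
    ∀ t ∈ T, ∀ i, sgMu T i ≤ t i := by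
  intro t ht i
  have hbdd : BddBelow {n : ℤ | ∃ α ∈ T, α i = n} :=
    ⟨lb i, by rintro n ⟨α, hα, rfl⟩; exact hlb α hα i⟩
  exact csInf_le hbdd ⟨t, ht, rfl⟩

lemma sgMu_mem (T : Set (I → ℤ)) (hT1 : propE1 T) (hne : T.Nonempty) (lb : I → ℤ)
    (hlb : ∀ t ∈ T, ∀ k, lb k ≤ t k) : sgMu T ∈ T := by
  classical
  have fold : ∀ s : Finset I, ∃ w ∈ T, ∀ i ∈ s, w i ≤ sgMu T i := by
    intro s
    induction s using Finset.induction_on with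
    | empty => exact ⟨hne.choose, hne.choose_spec, by simp⟩
    | @insert a s ha IH =>
      obtain ⟨w, hw, hws⟩ := IH
      obtain ⟨wa, hwa, hwaeq⟩ := sgMu_att T hne lb hlb a
      refine ⟨fun k => min (wa k) (w k), hT1 wa hwa w hw, ?_⟩
      intro i hi
      rcases Finset.mem_insert.1 hi with rfl | hi
      · calc min (wa i) (w i) ≤ wa i := min_le_left _ _
          _ = sgMu T i := hwaeq
      · exact le_trans (min_le_right _ _) (hws i hi)
  obtain ⟨w, hw, hwle⟩ := fold Finset.univ
  have : w = sgMu T := funext fun i =>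
    le_antisymm (hwle i (Finset.mem_univ i)) (sgMu_le T lb hlb w hw i)
  exact this ▸ hw

lemma gammaEq (T : Set (I → ℤ)) (g : I → ℤ) (hmem : g ∈ sgCond T)
    (hlow : ∀ w ∈ sgCond T, ∀ i, g i ≤ w i) : sgGamma T = g := by
  funext i
  have hbdd : BddBelow {n : ℤ | ∃ w ∈ sgCond T, w i = n} :=
    ⟨g i, by rintro n ⟨w, hw, rfl⟩; exact hlow w hw i⟩
  refine le_antisymm (csInf_le hbdd ⟨g, hmem, rfl⟩) (le_csInf ⟨g i, g, hmem, rfl⟩ ?_)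
  rintro n ⟨w, hw, rfl⟩
  exact hlow w hw i

/-- Lemma A : no element of a good ideal sits on `Δ(γ - 1)`. -/
lemma lemA (T : Set (I → ℤ)) (hT1 : propE1 T) (hT2 : propE2 T) (g : I → ℤ)
    (hg2 : ∀ z : I → ℤ, (∀ k, g k ≤ z k) → z ∈ T)
    (hg1 : ∀ w : I → ℤ, (∀ β : I → ℤ, 0 ≤ β → w + β ∈ T) → ∀ k, g k ≤ w k)
    (i : I) (η : I → ℤ) (hη : η ∈ T) (hηi : η i = g i - 1)
    (hηk : ∀ k, k ≠ i → g k ≤ η k) : False := by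
  classical
  have finish : ∀ ζ ∈ T, ζ i = g i - 1 → ∀ t : I → ℤ, t i = g i - 1 →
      (∀ k, k ≠ i → g k ≤ t k) → (∀ k, t k ≤ ζ k) → t ∈ T := by
    intro ζ hζ hζi t hti htk hle
    set w : I → ℤ := fun k => if k = i then g i else t k with hwdef
    have hwT : w ∈ T := by
      apply hg2
      intro k
      by_cases hk : k = i
      · subst hk; simp [hwdef]
      · simp only [hwdef, if_neg hk]; exact htk k hk
    have hmin := hT1 ζ hζ w hwT
    have heq : (fun k => min (ζ k) (w k)) = t := by
      funext k
      by_cases hk : k = i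
      · subst hk
        show min (ζ k) (w k) = t k
        have hwk : w k = g k := by simp [hwdef]
        rw [hwk, hζi, hti]
        exact min_eq_left (by omega)
      · show min (ζ k) (w k) = t k
        have hwk : w k = t k := by simp only [hwdef, if_neg hk]
        rw [hwk]
        exact min_eq_right (hle k)
    rwa [heq] at hmin
  have claim : ∀ n : ℕ, ∀ ζ ∈ T, ζ i = g i - 1 → (∀ k, k ≠ i → g k ≤ ζ k) →
      ∀ t : I → ℤ, t i = g i - 1 → (∀ k, k ≠ i → g k ≤ t k) →
      (∑ k, max 0 (t k - ζ k)) ≤ (n : ℤ) → t ∈ T := by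
    intro n
    induction n with
    | zero =>
      intro ζ hζ hζi hζk t hti htk hsum
      refine finish ζ hζ hζi t hti htk ?_
      intro k
      by_contra hgt
      push_neg at hgt
      have h1 : (1:ℤ) ≤ max 0 (t k - ζ k) := le_max_of_le_right (by omega)
      have h2 : ∀ j ∈ Finset.univ, (0:ℤ) ≤ max 0 (t j - ζ j) := fun j _ => le_max_left _ _
      have h3 := Finset.single_le_sum h2 (Finset.mem_univ k)
      omega
    | succ n IH =>
      intro ζ hζ hζi hζk t hti htk hsum
      by_cases hall : ∀ k, t k ≤ ζ k
      · exact finish ζ hζ hζi t hti htk hall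
      · push_neg at hall
        obtain ⟨k₀, hk₀⟩ := hall
        have hk₀i : k₀ ≠ i := by
          rintro rfl
          rw [hζi, hti] at hk₀
          omega
        set w : I → ℤ := fun k => if k = k₀ then ζ k₀ else max (ζ k) (max (t k) (g k)) with hwdef
        have hwge : ∀ k, g k ≤ w k := by
          intro k
          by_cases hk : k = k₀
          · subst hk
            have : w k = ζ k := by simp [hwdef]
            rw [this]
            exact hζk k hk₀i
          · have : w k = max (ζ k) (max (t k) (g k)) := by simp only [hwdef, if_neg hk]
            rw [this]
            exact le_max_of_le_right (le_max_right _ _)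
        have hwT : w ∈ T := hg2 w hwge
        have hζw : ζ k₀ = w k₀ := by simp [hwdef]
        obtain ⟨ε, hεT, hεgt, hεmin⟩ := hT2 ζ hζ w hwT k₀ hζw
        have hik₀ : ¬ (i = k₀) := fun h => hk₀i h.symm
        have hwi : w i = g i := by
          have h1 : max (t i) (g i) = g i := max_eq_right (by rw [hti]; omega)
          have h2 : max (ζ i) (max (t i) (g i)) = g i := by
            rw [h1]; exact max_eq_right (by rw [hζi]; omega)
          simp only [hwdef, if_neg hik₀]
          exact h2
        have hεi : ε i = g i - 1 := by
          have hne : ζ i ≠ w i := by rw [hζi, hwi]; omega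
          have h2 := (hεmin i).2 hne
          rw [h2, hζi, hwi]
          exact min_eq_left (by omega)
        have hwget : ∀ k, k ≠ k₀ → t k ≤ w k := by
          intro k hk
          have : w k = max (ζ k) (max (t k) (g k)) := by simp only [hwdef, if_neg hk]
          rw [this]
          exact le_max_of_le_right (le_max_left _ _)
        have hεk : ∀ k, k ≠ i → g k ≤ ε k := by
          intro k hk
          have h1 := (hεmin k).1
          have h2 : g k ≤ min (ζ k) (w k) := le_min (hζk k hk) (hwge k)
          omega
        have key₀ : max 0 (t k₀ - ε k₀) ≤ max 0 (t k₀ - ζ k₀) - 1 := by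
          have h1 : ζ k₀ < ε k₀ := hεgt
          have h2 : max 0 (t k₀ - ζ k₀) = t k₀ - ζ k₀ := max_eq_right (by omega)
          rw [h2]
          exact max_le (by omega) (by omega)
        have keyk : ∀ k, k ≠ k₀ → max 0 (t k - ε k) ≤ max 0 (t k - ζ k) := by
          intro k hk
          have h1 := (hεmin k).1
          have h2 : min (ζ k) (t k) ≤ min (ζ k) (w k) := min_le_min le_rfl (hwget k hk)
          rcases le_total (ζ k) (t k) with h | h
          · have h3 : min (ζ k) (t k) = ζ k := min_eq_left h
            exact max_le (le_max_left _ _) (le_max_of_le_right (by omega))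
          · have h3 : min (ζ k) (t k) = t k := min_eq_right h
            exact max_le (le_max_left _ _) (le_max_of_le_left (by omega))
        have hsum' : (∑ k, max 0 (t k - ε k)) ≤ (n : ℤ) := by
          have e1 := Finset.sum_erase_add Finset.univ
            (fun k => max 0 (t k - ε k)) (Finset.mem_univ k₀)
          have e2 := Finset.sum_erase_add Finset.univ
            (fun k => max 0 (t k - ζ k)) (Finset.mem_univ k₀)
          have e3 : (∑ k ∈ Finset.univ.erase k₀, max 0 (t k - ε k)) ≤
              ∑ k ∈ Finset.univ.erase k₀, max 0 (t k - ζ k) :=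
            Finset.sum_le_sum (fun k hk => keyk k (Finset.ne_of_mem_erase hk))
          push_cast at hsum
          linarith [e1, e2, e3, key₀, hsum]
        exact IH ε hεT hεi hεk t hti htk hsum'
  have hfin : ∀ β : I → ℤ, 0 ≤ β → (fun k => if k = i then g i - 1 else g k) + β ∈ T := by
    intro β hβ
    have hβnn : ∀ k, (0:ℤ) ≤ β k := fun k => hβ k
    by_cases hbi : 1 ≤ β i
    · apply hg2
      intro k
      by_cases hk : k = i
      · subst hk; simp only [Pi.add_apply, if_pos rfl]; omega
      · simp only [Pi.add_apply, if_neg hk]; have := hβnn k; omega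
    · have hβi0 : β i = 0 := by have := hβnn i; omega
      set t : I → ℤ := (fun k => if k = i then g i - 1 else g k) + β with htdef
      have hti : t i = g i - 1 := by simp [htdef, hβi0]
      have htk : ∀ k, k ≠ i → g k ≤ t k := by
        intro k hk
        simp only [htdef, Pi.add_apply, if_neg hk]
        have := hβnn k; omega
      exact claim (∑ k, max 0 (t k - η k)).toNat η hη hηi hηk t hti htk (Int.self_le_toNat _)
  have h := hg1 _ hfin i
  have h2 : g i ≤ g i - 1 := by simpa using h
  omega

/-- Core lemma: (E2) for the relative canonical set `{w | Δ(θ-w) ∩ T = ∅}`. -/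
lemma coreE2 (T : Set (I → ℤ)) (hT2 : propE2 T) (lb : I → ℤ)
    (hlb : ∀ β ∈ T, ∀ k, lb k ≤ β k) (θ : I → ℤ) :
    propE2 {w : I → ℤ | DFree T (θ - w)} := by
  classical
  intro α hα α' hα' j hj
  have hmK : (fun k => min (α k) (α' k)) ∈ {w : I → ℤ | DFree T (θ - w)} :=
    KE1 T θ α hα α' hα'
  set m : I → ℤ := fun k => min (α k) (α' k) with hmdef
  have hmDF : DFree T (θ - m) := hmK
  have hmj : m j = α j := by rw [hmdef]; simp only []; rw [← hj, min_self]
  have hmle : ∀ k, m k ≤ α k ∧ m k ≤ α' k := fun k => ⟨min_le_left _ _, min_le_right _ _⟩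
  have SFL : ∀ i : I, α i ≠ α' i → ∃ κ, DFree T (θ - κ) ∧ (∀ k, m k ≤ κ k) ∧
      κ i = m i ∧ m j < κ j := by
    intro i hi
    have hij : i ≠ j := by rintro rfl; exact hi hj
    obtain ⟨w, hwDF, hwge, hwi, hwj⟩ : ∃ w, DFree T (θ - w) ∧ (∀ k, m k ≤ w k) ∧
        m i < w i ∧ w j = m j := by
      rcases lt_or_gt_of_ne hi with h | h
      · refine ⟨α', hα', fun k => (hmle k).2, ?_, ?_⟩
        · have : m i = α i := min_eq_left (le_of_lt h)
          omega
        · rw [hmj, hj]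
      · refine ⟨α, hα, fun k => (hmle k).1, ?_, ?_⟩
        · have : m i = α' i := min_eq_right (le_of_lt h)
          omega
        · rw [hmj]
    have hpair : ∀ β ∈ T, β i = θ i - m i → β j = θ j - m j →
        (∀ k, k ≠ i → k ≠ j → θ k - m k < β k) → False := by
      intro β hβ hβi hβj hβk
      obtain ⟨k, hk, hle⟩ := hwDF β hβ j (by
        show β j = (θ - w) j
        rw [Pi.sub_apply, hwj, hβj])
      have hlek : β k ≤ θ k - w k := hle
      by_cases hki : k = i
      · subst hki
        rw [hβi] at hlek
        omega
      · have h1 := hβk k hki hk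
        have h2 := hwge k
        omega
    set y : I → ℤ := fun k => if k = j then θ j - m j - 1 else θ k - m k with hydef
    have hyi : y i = θ i - m i := by simp only [hydef, if_neg hij]
    obtain ⟨ℓ, hl1, hl2, hCUT, hDODGE⟩ := master T hT2 lb hlb i
      (Finset.univ.card) (Finset.univ.erase i) (Finset.card_le_card (Finset.subset_univ _))
      (Finset.notMem_erase i _) y (by
        intro β hβ hβi hgate
        by_contra hno
        push_neg at hno
        have hno' : ∀ k, k ≠ i → y k < β k := by
          intro k hk
          exact hno k (Finset.mem_erase.2 ⟨hk, Finset.mem_univ k⟩)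
        obtain ⟨k, hk, hle⟩ := hmDF β hβ i (by rw [hβi, hyi]; rfl)
        have hlek : β k ≤ θ k - m k := hle
        by_cases hkj : k = j
        · subst hkj
          have h1 : y k < β k := hno' k hk
          rw [hydef] at h1
          simp only [if_pos rfl] at h1
          have hβj : β k = θ k - m k := by omega
          refine hpair β hβ (by rw [hβi, hyi]) hβj ?_
          intro k' hk'i hk'j
          have := hno' k' hk'i
          rw [hydef] at this
          simp only [if_neg hk'j] at this
          exact this
        · have := hno' k hk
          rw [hydef] at this
          simp only [if_neg hkj] at this
          omega)
    refine ⟨θ - ℓ, ?_, ?_, ?_, ?_⟩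
    · have hsub : θ - (θ - ℓ) = ℓ := by ring
      rw [hsub]
      intro β hβ k₀ hβk₀
      by_cases hk₀ : k₀ = i
      · subst hk₀
        have hβi : β k₀ = y k₀ := by
          rw [hl2 k₀ (Finset.notMem_erase k₀ _)] at hβk₀
          exact hβk₀
        exact hCUT β hβ hβi
      · by_contra hno
        push_neg at hno
        have hiℓ : ℓ i = y i := hl2 i (Finset.notMem_erase i _)
        have hDod := hDODGE k₀ (Finset.mem_erase.2 ⟨hk₀, Finset.mem_univ k₀⟩) β hβ hβk₀ (by
          have := hno i (Ne.symm hk₀)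
          rw [hiℓ] at this
          omega)
        obtain ⟨k, _, hkk₀, hle⟩ := hDod
        exact absurd hle (not_le.2 (hno k hkk₀))
    · intro k
      have h1 := hl1 k
      have h2 : y k ≤ θ k - m k := by
        rw [hydef]
        by_cases hkj : k = j <;> simp [hkj]
      show m k ≤ θ k - ℓ k
      omega
    · have : ℓ i = y i := hl2 i (Finset.notMem_erase i _)
      show θ i - ℓ i = m i
      rw [this, hyi]
      ring
    · have h1 : ℓ j ≤ θ j - m j - 1 := by
        have h := hl1 j
        rw [hydef] at h
        simpa using h
      show m j < θ j - ℓ j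
      omega
  have base : ∃ κ, DFree T (θ - κ) ∧ (∀ k, m k ≤ κ k) ∧ m j < κ j := by
    set y₀ : I → ℤ := fun k => min (lb k - 1) (θ k - m k - 1) with hy₀
    refine ⟨θ - y₀, ?_, ?_, ?_⟩
    · have hsub : θ - (θ - y₀) = y₀ := by ring
      rw [hsub]
      intro x hx k hxk
      exfalso
      have h1 := hlb x hx k
      have h2 : y₀ k ≤ lb k - 1 := min_le_left _ _
      rw [hxk] at h1
      omega
    · intro k
      have h2 : y₀ k ≤ θ k - m k - 1 := min_le_right _ _
      show m k ≤ θ k - y₀ k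
      omega
    · have h2 : y₀ j ≤ θ j - m j - 1 := min_le_right _ _
      show m j < θ j - y₀ j
      omega
  have fold : ∀ s : Finset I, ∃ κ, DFree T (θ - κ) ∧ (∀ k, m k ≤ κ k) ∧ m j < κ j ∧
      ∀ i ∈ s, α i ≠ α' i → κ i = m i := by
    intro s
    induction s using Finset.induction_on with
    | empty =>
      obtain ⟨κ, h1, h2, h3⟩ := base
      exact ⟨κ, h1, h2, h3, by simp⟩
    | @insert a s ha IH =>
      obtain ⟨κ, h1, h2, h3, h4⟩ := IH
      by_cases hne : α a ≠ α' a
      · obtain ⟨κ', h1', h2', h3', h4'⟩ := SFL a hne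
        refine ⟨fun k => min (κ' k) (κ k), KE1 T θ κ' h1' κ h1, ?_, ?_, ?_⟩
        · intro k; exact le_min (h2' k) (h2 k)
        · exact lt_min h4' h3
        · intro i hi hnei
          rcases Finset.mem_insert.1 hi with rfl | hi
          · have hle : m i ≤ κ i := h2 i
            show min (κ' i) (κ i) = m i
            rw [h3']
            exact min_eq_left hle
          · have hκi : κ i = m i := h4 i hi hnei
            have hle : m i ≤ κ' i := h2' i
            show min (κ' i) (κ i) = m i
            rw [hκi]
            exact min_eq_right hle
      · refine ⟨κ, h1, h2, h3, ?_⟩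
        intro i hi hne'
        rcases Finset.mem_insert.1 hi with rfl | hi
        · exact absurd hne' hne
        · exact h4 i hi hne'
  obtain ⟨ε, hεDF, hεge, hεj, hεD⟩ := fold Finset.univ
  refine ⟨ε, hεDF, ?_, ?_⟩
  · rw [← hmj]; exact hεj
  · intro i
    refine ⟨hεge i, fun hne => ?_⟩
    exact hεD i (Finset.mem_univ i) hne

end Auxiliary


/-- **Lemma.** Let `E` be a good semigroup ideal of a good semigroup `S` with
`γ_E = γ_S`. If `E − E` is a symmetric good semigroup, then
`E − E = K_S^0 − E`. -/
theorem stmt_4 {I : Type*} [Fintype I] [Nonempty I] (S E : Set (I → ℤ))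
    (hS : IsGoodSemigroup S) (hE : IsGoodIdeal S E)
    (hγ : sgGamma E = sgGamma S)
    (hsym : IsSymmetricSg (sgDiff E E)) :
    sgDiff E E = sgDiff (sgK0 S) E := by
  classical
  obtain ⟨hS0, hSadd, hSnn, ⟨αS, hαS⟩, hSE1, hSE2⟩ := hS
  obtain ⟨⟨hEne, hEstab, aS, haSS, haE⟩, hEE1, hEE2⟩ := hE
  obtain ⟨e₀, he₀⟩ := hEne
  -- lower bound for E
  set lbE : I → ℤ := fun k => -(aS k) with hlbEdef
  have hlbE : ∀ e ∈ E, ∀ k, lbE k ≤ e k := by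
    intro e he k
    have h1 : (0 : I → ℤ) ≤ aS + e := hSnn _ (haE e he)
    have h2 : (0:ℤ) ≤ aS k + e k := h1 k
    simp only [hlbEdef]
    omega
  -- conductor for E
  have hcondE : ∀ z : I → ℤ, (∀ k, e₀ k + αS k ≤ z k) → z ∈ E := by
    intro z hz
    have hmem : z - e₀ ∈ S := hαS _ (by
      intro k
      have := hz k
      simp only [Pi.sub_apply]
      omega)
    have h := hEstab e₀ he₀ _ hmem
    have heq : e₀ + (z - e₀) = z := by ring
    rwa [heq] at h
  -- conductor ideal facts for E
  have hCEsubE : ∀ w ∈ sgCond E, w ∈ E := by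
    intro w hw
    have h0m : (0:I → ℤ) ∈ {β : I → ℤ | 0 ≤ β} := by
      simp only [Set.mem_setOf_eq, le_refl]
    have := hw 0 h0m
    simpa using this
  have hCE1 : propE1 (sgCond E) := by
    intro u hu v hv β hβ
    have h1 := hu β hβ
    have h2 := hv β hβ
    have heq : (fun i => min (u i) (v i)) + β = fun i => min ((u + β) i) ((v + β) i) := by
      funext k
      simp only [Pi.add_apply]
      exact (min_add_add_right _ _ _).symm
    rw [heq]
    exact hEE1 (u + β) h1 (v + β) h2
  have hCEne : (e₀ + αS) ∈ sgCond E := by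
    intro β hβ
    apply hcondE
    intro k
    have : (0:ℤ) ≤ β k := hβ k
    simp only [Pi.add_apply]
    omega
  have hCElb : ∀ w ∈ sgCond E, ∀ k, lbE k ≤ w k := fun w hw k => hlbE w (hCEsubE w hw) k
  have hγEmem : sgGamma E ∈ sgCond E :=
    sgMu_mem (sgCond E) hCE1 ⟨e₀ + αS, hCEne⟩ lbE hCElb
  have hγE2 : ∀ z : I → ℤ, (∀ k, sgGamma E k ≤ z k) → z ∈ E := by
    intro z hz
    have h := hγEmem (z - sgGamma E) (by
      intro k
      simp only [Pi.sub_apply, Pi.zero_apply]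
      have := hz k
      omega)
    have heq : sgGamma E + (z - sgGamma E) = z := by ring
    rwa [heq] at h
  have hγE1 : ∀ w ∈ sgCond E, ∀ k, sgGamma E k ≤ w k :=
    fun w hw k => sgMu_le (sgCond E) lbE hCElb w hw k
  -- μE facts
  have hEne' : E.Nonempty := ⟨e₀, he₀⟩
  have hμle : ∀ e ∈ E, ∀ k, sgMu E k ≤ e k := fun e he k => sgMu_le E lbE hlbE e he k
  have hμatt : ∀ i : I, ∃ e ∈ E, e i = sgMu E i := fun i => sgMu_att E hEne' lbE hlbE i
  -- K facts
  have hKmem : ∀ z : I → ℤ, z ∈ sgK0 S ↔ DFree S (sgTau S - z) := by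
    intro z
    rw [sgK0, Set.mem_setOf_eq, dfree_iff]
  have hτ : ∀ k, sgTau S k = sgGamma E k - 1 := by
    intro k
    simp only [sgTau, Pi.sub_apply, Pi.one_apply, ← hγ]
  have hK1 : ∀ z : I → ℤ, (∀ k, sgGamma E k ≤ z k) → z ∈ sgK0 S := by
    intro z hz
    rw [hKmem]
    intro x hx i hxi
    exfalso
    have h0 : (0 : I → ℤ) ≤ x := hSnn x hx
    have h1 : (0:ℤ) ≤ x i := h0 i
    have h2 : x i = sgTau S i - z i := hxi
    rw [hτ i] at h2
    have := hz i
    omega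
  have hEK : E ⊆ sgK0 S := by
    intro e he
    rw [hKmem]
    intro x hx i hxi
    by_contra hno
    push_neg at hno
    have hηmem : e + x ∈ E := hEstab e he x hx
    refine lemA E hEE1 hEE2 (sgGamma E) hγE2 (fun w hw => hγE1 w hw) i (e + x) hηmem ?_ ?_
    · have h2 : x i = sgTau S i - e i := hxi
      rw [hτ i] at h2
      simp only [Pi.add_apply]
      omega
    · intro k hk
      have h2 := hno k hk
      simp only [Pi.sub_apply] at h2
      rw [hτ k] at h2
      simp only [Pi.add_apply]
      omega
  -- B facts
  have h0B : (0 : I → ℤ) ∈ sgDiff E E := by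
    intro e he
    simpa using he
  -- characterization of F = K⁰ − E
  have hFchar : ∀ w : I → ℤ, w ∈ sgDiff (sgK0 S) E ↔ DFree E (sgTau S - w) := by
    intro w
    constructor
    · intro hw x hx i hxi
      by_contra hno
      push_neg at hno
      have hκ : w + x ∈ sgK0 S := hw x hx
      rw [hKmem] at hκ
      obtain ⟨k, hk, hle⟩ := hκ 0 hS0 i (by
        show (0 : I → ℤ) i = (sgTau S - (w + x)) i
        have h2 : x i = sgTau S i - w i := hxi
        simp only [Pi.zero_apply, Pi.sub_apply, Pi.add_apply]
        omega)
      have h1 : (0:ℤ) ≤ (sgTau S - (w + x)) k := hle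
      simp only [Pi.sub_apply, Pi.add_apply] at h1
      have h2 := hno k hk
      simp only [Pi.sub_apply] at h2
      omega
    · intro hDF e he
      rw [hKmem]
      intro σ hσ i hσi
      by_contra hno
      push_neg at hno
      have hmem : e + σ ∈ E := hEstab e he σ hσ
      obtain ⟨k, hk, hle⟩ := hDF (e + σ) hmem i (by
        show (e + σ) i = (sgTau S - w) i
        have h2 : σ i = (sgTau S - (w + e)) i := hσi
        simp only [Pi.sub_apply, Pi.add_apply] at h2 ⊢
        omega)
      have h1 : (e + σ) k ≤ (sgTau S - w) k := hle
      have h2 := hno k hk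
      simp only [Pi.sub_apply, Pi.add_apply] at h1 h2
      omega
  have hBF : sgDiff E E ⊆ sgDiff (sgK0 S) E := fun b hb e he => hEK (hb e he)
  have hFnn : ∀ w ∈ sgDiff (sgK0 S) E, ∀ k, (0:ℤ) ≤ w k := by
    intro w hw k
    by_contra hneg
    push_neg at hneg
    rw [hFchar] at hw
    set e : I → ℤ :=
      fun k' => if k' = k then sgTau S k - w k else max (sgGamma E k') (sgTau S k' - w k' + 1)
      with hedef
    have heE : e ∈ E := by
      apply hγE2
      intro k'
      by_cases hk' : k' = k
      · subst hk'
        simp only [hedef, if_pos rfl]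
        have := hτ k'
        omega
      · simp only [hedef, if_neg hk']
        exact le_max_left _ _
    obtain ⟨k', hk', hle⟩ := hw e heE k (by
      show e k = (sgTau S - w) k
      simp only [hedef, if_pos rfl, Pi.sub_apply])
    have h1 : e k' = max (sgGamma E k') (sgTau S k' - w k' + 1) := by
      simp only [hedef, if_neg hk']
    have h2 : sgTau S k' - w k' + 1 ≤ e k' := h1 ▸ le_max_right _ _
    have h3 : e k' ≤ (sgTau S - w) k' := hle
    simp only [Pi.sub_apply] at h3
    omega
  -- F is a good ideal of B
  have hFBstab : ∀ w ∈ sgDiff (sgK0 S) E, ∀ b ∈ sgDiff E E, w + b ∈ sgDiff (sgK0 S) E := by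
    intro w hw b hb e he
    have h1 : b + e ∈ E := hb e he
    have h := hw (b + e) h1
    have heq : w + b + e = w + (b + e) := by ring
    rwa [heq]
  have haB : (fun k => sgGamma E k - sgMu E k) ∈ sgDiff E E := by
    intro e he
    apply hγE2
    intro k
    simp only [Pi.add_apply]
    have := hμle e he k
    omega
  have hathird : ∀ w ∈ sgDiff (sgK0 S) E, (fun k => sgGamma E k - sgMu E k) + w ∈ sgDiff E E := by
    intro w hw e he
    apply hγE2
    intro k
    simp only [Pi.add_apply]
    have h1 := hμle e he k
    have h2 := hFnn w hw k
    omega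
  have hFsetEq : sgDiff (sgK0 S) E = {w : I → ℤ | DFree E (sgTau S - w)} := Set.ext hFchar
  have hFE1 : propE1 (sgDiff (sgK0 S) E) := by
    rw [hFsetEq]; exact KE1 E (sgTau S)
  have hFE2 : propE2 (sgDiff (sgK0 S) E) := by
    rw [hFsetEq]; exact coreE2 E hEE2 lbE hlbE (sgTau S)
  have hFgood : IsGoodIdeal (sgDiff E E) (sgDiff (sgK0 S) E) :=
    ⟨⟨⟨0, hBF h0B⟩, hFBstab, ⟨_, haB, hathird⟩⟩, hFE1, hFE2⟩
  -- γ computations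
  have hγB : sgGamma (sgDiff E E) = fun k => sgGamma E k - sgMu E k := by
    apply gammaEq
    · intro β hβ e he
      apply hγE2
      intro k
      simp only [Pi.add_apply]
      have h1 := hμle e he k
      have h2 : (0:ℤ) ≤ β k := hβ k
      omega
    · intro w hw i
      obtain ⟨ei, hei, heieq⟩ := hμatt i
      have hwC : w + ei ∈ sgCond E := by
        intro β hβ
        have h1 := hw β hβ
        have h2 := h1 ei hei
        have heq : w + ei + β = w + β + ei := by ring
        rwa [heq]
      have h := hγE1 (w + ei) hwC i
      simp only [Pi.add_apply] at h
      omega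
  have hγF : sgGamma (sgDiff (sgK0 S) E) = fun k => sgGamma S k - sgMu E k := by
    apply gammaEq
    · intro β hβ e he
      apply hK1
      intro k
      simp only [Pi.add_apply]
      have h1 := hμle e he k
      have h2 : (0:ℤ) ≤ β k := hβ k
      have h3 : sgGamma S k = sgGamma E k := by rw [← hγ]
      omega
    · intro w hw i
      by_contra hlt
      push_neg at hlt
      obtain ⟨ei, hei, heieq⟩ := hμatt i
      set v : I → ℤ := fun k => if k = i then sgTau S i - w i - sgMu E i
        else max 0 (sgTau S k - w k - ei k + 1) with hvdef
      have hvnn : (0 : I → ℤ) ≤ v := by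
        intro k
        by_cases hk : k = i
        · subst hk
          simp only [hvdef, if_pos rfl, Pi.zero_apply]
          have h1 := hτ k
          have h2 : sgGamma S k = sgGamma E k := by rw [← hγ]
          omega
        · simp only [hvdef, if_neg hk, Pi.zero_apply]
          exact le_max_left _ _
      have hwv : w + v ∈ sgDiff (sgK0 S) E := hw v hvnn
      have hκ : (w + v) + ei ∈ sgK0 S := hwv ei hei
      rw [hKmem] at hκ
      obtain ⟨k, hk, hle⟩ := hκ 0 hS0 i (by
        show (0 : I → ℤ) i = (sgTau S - (w + v + ei)) i
        have hvi : v i = sgTau S i - w i - sgMu E i := by simp [hvdef]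
        simp only [Pi.zero_apply, Pi.sub_apply, Pi.add_apply, hvi]
        omega)
      have h1 : (0:ℤ) ≤ (sgTau S - (w + v + ei)) k := hle
      simp only [Pi.sub_apply, Pi.add_apply] at h1
      have h2 : v k = max 0 (sgTau S k - w k - ei k + 1) := by
        simp only [hvdef, if_neg hk]
      have h3 : sgTau S k - w k - ei k + 1 ≤ v k := h2 ▸ le_max_right _ _
      omega
  have hγFB : sgGamma (sgDiff (sgK0 S) E) = sgGamma (sgDiff E E) := by
    rw [hγF, hγB]
    funext k
    rw [← hγ]
  exact (hsym.2.2 (sgDiff (sgK0 S) E) hFgood hγFB hBF).symm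
end

section
/- Let S be a good semigroup and let α ∈ ℤ^I with α ≤ γ_S. Then S^α − S^α = S − S^α. -/
/-- **Lemma.** Let `S` be a good semigroup and `α ∈ ℤ^I` with `α ≤ γ_S`. Then
`S^α − S^α = S − S^α`, where `S^α = {β ∈ S : β ≥ α}`. -/
theorem stmt_6 {I : Type*} [Fintype I] [Nonempty I] (S : Set (I → ℤ))
    (hS : IsGoodSemigroup S) (α : I → ℤ) (hα : α ≤ sgGamma S) :
    sgDiff {β ∈ S | α ≤ β} {β ∈ S | α ≤ β} = sgDiff S {β ∈ S | α ≤ β} := by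
  obtain ⟨hzero, hadd, hnn, hE0, hE1, hE2⟩ := hS
  set C := sgCond S with hCdef
  have hCmem : ∀ c : I → ℤ, c ∈ C ↔ ∀ ν : I → ℤ, 0 ≤ ν → c + ν ∈ S := by
    intro c; exact Iff.rfl
  have hCS : C ⊆ S := by
    intro c hc
    simpa using (hCmem c).1 hc 0 le_rfl
  have hCne : C.Nonempty := by
    obtain ⟨a, ha⟩ := hE0
    exact ⟨a, (hCmem a).2 fun ν hν => ha _ (le_add_of_nonneg_right hν)⟩
  have hCpos : ∀ c ∈ C, (0 : I → ℤ) ≤ c := fun c hc => hnn c (hCS hc)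
  have hgle : ∀ c ∈ C, sgGamma S ≤ c := by
    intro c hc i
    show sInf {n : ℤ | ∃ a ∈ C, a i = n} ≤ c i
    exact csInf_le ⟨0, fun n ⟨a, haC, hai⟩ => hai ▸ hCpos a haC i⟩ ⟨c, hc, rfl⟩
  have hCinf : ∀ a ∈ C, ∀ b ∈ C, (fun i => min (a i) (b i)) ∈ C := by
    intro a ha b hb
    refine (hCmem _).2 fun ν hν => ?_
    have h := hE1 (a + ν) ((hCmem a).1 ha ν hν) (b + ν) ((hCmem b).1 hb ν hν)
    have heq : ((fun i => min (a i) (b i)) + ν) =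
        fun i => min ((a + ν) i) ((b + ν) i) := by
      funext i
      simp [min_add_add_right]
    rw [heq]; exact h
  have hgi : ∀ i : I, ∃ c ∈ C, c i = sgGamma S i := by
    intro i
    obtain ⟨c0, hc0⟩ := hCne
    have hne : {n : ℤ | ∃ a ∈ C, a i = n}.Nonempty := ⟨c0 i, c0, hc0, rfl⟩
    have hbdd : BddBelow {n : ℤ | ∃ a ∈ C, a i = n} :=
      ⟨0, fun n ⟨a, haC, hai⟩ => hai ▸ hCpos a haC i⟩
    obtain ⟨c, hc, hci⟩ := Int.csInf_mem hne hbdd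
    exact ⟨c, hc, hci⟩
  classical
  have key : ∀ t : Finset I, ∃ b ∈ C, ∀ i ∈ t, b i ≤ sgGamma S i := by
    intro t
    induction t using Finset.induction_on with
    | empty => exact hCne.imp fun c hc => ⟨hc, fun i hi => absurd hi (by simp)⟩
    | @insert j t hj ih =>
      obtain ⟨b, hb, hbt⟩ := ih
      obtain ⟨c, hcC, hcj⟩ := hgi j
      refine ⟨fun i => min (b i) (c i), hCinf b hb c hcC, fun i hi => ?_⟩
      rcases Finset.mem_insert.1 hi with h | h
      · subst h; exact le_trans (min_le_right _ _) (le_of_eq hcj)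
      · exact le_trans (min_le_left _ _) (hbt i h)
  have hγC : sgGamma S ∈ C := by
    obtain ⟨b, hb, hball⟩ := key Finset.univ
    have hbγ : b = sgGamma S :=
      le_antisymm (fun i => hball i (Finset.mem_univ i)) (hgle b hb)
    exact hbγ ▸ hb
  ext δ
  constructor
  · intro h β hβ
    exact (h β hβ).1
  · intro h β hβ
    refine ⟨h β hβ, ?_⟩
    have hδ : (0 : I → ℤ) ≤ δ := by
      have h2 : δ + sgGamma S ∈ C := by
        refine (hCmem _).2 fun ν hν => ?_
        have hmem : sgGamma S + ν ∈ {β ∈ S | α ≤ β} :=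
          ⟨(hCmem _).1 hγC ν hν, le_trans hα (le_add_of_nonneg_right hν)⟩
        have h3 := h (sgGamma S + ν) hmem
        simpa [add_assoc] using h3
      have h4 := hgle _ h2
      intro i
      have h5 := h4 i
      simp only [Pi.add_apply] at h5
      simp only [Pi.zero_apply]
      linarith
    exact le_trans hβ.2 (le_add_of_nonneg_left hδ)
end

section
/- Let S be a local symmetric good semigroup with maximal ideal M_S = S ∖ {0}. If S ≠ ℕ^I, then M_S − M_S = S ∪ Δ(τ_S). -/
/-! For a symmetric `S` the normalized canonical ideal `K_S^0 = {α | Δ(τ - α) ∩ S = ∅}` equals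
`S`, because `K_S^0` is a good ideal containing `S` with the same conductor. So for `α ∉ S` there
is `σ ∈ S` with `σ + α ∈ Δ(τ)`. Since `S ∩ Δ(τ) = ∅`, for `α ∈ M − M` this forces `σ = 0`, that
is `α ∈ Δ(τ)`. Conversely every `w ∈ M` is `≥ 1` by locality, which pushes `S + w` into `M` and
`Δ(τ) + w` above the conductor.

The substantial step is (E2) for `K_S^0`, read through `x ↦ τ - x` as a statement about the
points `x` with `Δ(x) ∩ S = ∅`. Starting from `max(x, y)` lowered by one at `j`, one lowers
one coordinate `k'` at a time as long as some element of `S` lies in `Δ_{k'}`; (E2) for `S` shows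
that this never puts an element of `S` into `Δ_k` for the coordinates `k` that must stay fixed. -/

open Function

section Development

variable {I : Type*} {S : Set (I → ℤ)}

/-- The set `Δ_i(α)` of the paper. -/
def sgDeltaAt (i : I) (α : I → ℤ) : Set (I → ℤ) :=
  {β | β i = α i ∧ ∀ j, j ≠ i → α j < β j}

lemma mem_sgDelta_iff {α β : I → ℤ} : β ∈ sgDelta α ↔ ∃ i, β ∈ sgDeltaAt i α :=
  Set.mem_iUnion

lemma add_mem_sgDeltaAt_iff {i : I} {σ α t : I → ℤ} :
    σ + α ∈ sgDeltaAt i t ↔ σ ∈ sgDeltaAt i (t - α) := by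
  simp only [sgDeltaAt, Set.mem_ofPred_eq, Pi.add_apply, Pi.sub_apply]
  constructor <;> rintro ⟨hi, hj⟩ <;> refine ⟨by omega, fun j hji => ?_⟩ <;>
    linarith [hj j hji]

lemma add_mem_sgDelta_iff {σ α t : I → ℤ} : σ + α ∈ sgDelta t ↔ σ ∈ sgDelta (t - α) := by
  simp only [mem_sgDelta_iff, add_mem_sgDeltaAt_iff]

lemma sgDeltaAt_subset_of_le {i : I} {x y : I → ℤ} (hxy : x ≤ y) (hi : x i = y i) :
    sgDeltaAt i y ⊆ sgDeltaAt i x :=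
  fun _ ⟨hβi, hβj⟩ => ⟨hβi.trans hi.symm, fun j hj => (hxy j).trans_lt (hβj j hj)⟩

lemma sgDelta_sup_subset (x y : I → ℤ) : sgDelta (x ⊔ y) ⊆ sgDelta x ∪ sgDelta y := by
  intro β hβ
  obtain ⟨i, hi⟩ := mem_sgDelta_iff.1 hβ
  rcases le_total (x i) (y i) with h | h
  · exact Or.inr <| mem_sgDelta_iff.2
      ⟨i, sgDeltaAt_subset_of_le le_sup_right (sup_eq_right.2 h).symm hi⟩
  · exact Or.inl <| mem_sgDelta_iff.2
      ⟨i, sgDeltaAt_subset_of_le le_sup_left (sup_eq_left.2 h).symm hi⟩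

lemma sgDelta_sup_inter_eq_empty {x y : I → ℤ} (hx : sgDelta x ∩ S = ∅)
    (hy : sgDelta y ∩ S = ∅) : sgDelta (x ⊔ y) ∩ S = ∅ := by
  refine Set.subset_empty_iff.1 <|
    (Set.inter_subset_inter_left S (sgDelta_sup_subset x y)).trans ?_
  rw [Set.union_inter_distrib_right, hx, hy, Set.union_empty]

lemma exists_mem_sgDeltaAt_ge (t b : I → ℤ) {i : I} (hi : b i ≤ t i) :
    ∃ σ ∈ sgDeltaAt i t, b ≤ σ := by
  classical
  refine ⟨update (b ⊔ (t + 1)) i (t i), ⟨by simp, fun j hj => ?_⟩, fun j => ?_⟩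
  · simp [hj]
  · by_cases hj : j = i
    · subst hj; simpa using hi
    · simp [hj]

lemma sgDeltaAt_update_inter_eq_empty [DecidableEq I] (hE2 : propE2 S) {c p : I → ℤ}
    {k k' : I} (hp : p ∈ sgDeltaAt k' c) (hpS : p ∈ S) (hk : k ≠ k') (hc : sgDeltaAt k c ∩ S = ∅) :
    sgDeltaAt k (update c k' (c k' - 1)) ∩ S = ∅ := by
  refine Set.eq_empty_of_forall_notMem fun t ⟨⟨htk, ht⟩, htS⟩ => ?_
  rw [update_of_ne hk] at htk
  have ht' : ∀ j, j ≠ k → j ≠ k' → c j < t j := fun j hj hj' => by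
    simpa [update_of_ne hj'] using ht j hj
  have htk' : c k' ≤ t k' := by have h := ht k' hk.symm; rw [update_self] at h; omega
  rcases htk'.lt_or_eq with hlt | heq
  · refine (Set.eq_empty_iff_forall_notMem.1 hc) t ⟨⟨htk, fun j hj => ?_⟩, htS⟩
    by_cases hj' : j = k'
    · exact hj' ▸ hlt
    · exact ht' j hj hj'
  -- `t` and `p` agree at `k'`; (E2) yields an element of `S` in `Δ_k(c)`
  obtain ⟨r, hrS, hrk', hr⟩ := hE2 t htS p hpS k' (heq.symm.trans hp.1.symm)
  have hpk := hp.2 k hk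
  refine (Set.eq_empty_iff_forall_notMem.1 hc) r ⟨⟨?_, fun j hj => ?_⟩, hrS⟩
  · have := (hr k).2 (by omega)
    omega
  · by_cases hj' : j = k'
    · subst hj'; omega
    · have := (hr j).1
      have := hp.2 j hj'
      have := ht' j hj hj'
      omega

lemma mem_sgDeltaAt_of_mem_sgDeltaAt_update [DecidableEq I] {x y t : I → ℤ} {j k : I}
    (hj : x j = y j) (hk : x k < y k) (ht : t ∈ sgDeltaAt k (update (x ⊔ y) j (x j - 1))) :
    t ∈ sgDeltaAt k (x ⊔ y) ∨ t ∈ sgDeltaAt j x := by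
  obtain ⟨htk, ht⟩ := ht
  have hjk : j ≠ k := by rintro rfl; omega
  rw [update_of_ne hjk.symm] at htk
  have ht' : ∀ i, i ≠ k → i ≠ j → (x ⊔ y) i < t i := fun i hi hij => by
    simpa [update_of_ne hij] using ht i hi
  have htj : x j ≤ t j := by have h := ht j hjk; rw [update_self] at h; omega
  rcases htj.lt_or_eq with hlt | heq
  · refine Or.inl ⟨htk, fun i hi => ?_⟩
    by_cases hij : i = j
    · subst hij; simpa only [Pi.sup_apply, hj, max_self] using hlt
    · exact ht' i hi hij
  · refine Or.inr ⟨heq.symm, fun i hi => ?_⟩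
    by_cases hik : i = k
    · subst hik; rw [Pi.sup_apply] at htk; omega
    · have h := ht' i hik hi; rw [Pi.sup_apply] at h; omega

lemma mem_sgCond_iff {E : Set (I → ℤ)} {α : I → ℤ} :
    α ∈ sgCond E ↔ ∀ δ, α ≤ δ → δ ∈ E := by
  refine ⟨fun h δ hδ => ?_, fun h β hβ => h _ (le_add_of_nonneg_right hβ)⟩
  simpa using h (δ - α) (sub_nonneg.2 hδ)

lemma sgMu_eq_of_isLeast {E : Set (I → ℤ)} {a : I → ℤ} (h : IsLeast E a) : sgMu E = a := by
  funext i
  have hbdd : BddBelow {n : ℤ | ∃ α ∈ E, α i = n} :=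
    ⟨a i, by rintro _ ⟨α, hα, rfl⟩; exact h.2 hα i⟩
  exact le_antisymm (csInf_le hbdd ⟨a, h.1, rfl⟩)
    (le_csInf ⟨a i, a, h.1, rfl⟩ (by rintro _ ⟨α, hα, rfl⟩; exact h.2 hα i))

lemma sgTau_apply (E : Set (I → ℤ)) (i : I) : sgTau E i = sgGamma E i - 1 := rfl

lemma mem_sgK0_iff {α : I → ℤ} : α ∈ sgK0 S ↔ ∀ σ ∈ S, σ + α ∉ sgDelta (sgTau S) := by
  simp only [sgK0, Set.mem_ofPred_eq, Set.eq_empty_iff_forall_notMem, Set.mem_inter_iff,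
    add_mem_sgDelta_iff, not_and']

lemma propE1_sgK0 : propE1 (sgK0 S) := fun α hα β hβ => by
  show sgDelta (sgTau S - α ⊓ β) ∩ S = ∅
  rw [sub_inf]
  exact sgDelta_sup_inter_eq_empty hα hβ

lemma add_mem_sgK0 (hadd : ∀ α ∈ S, ∀ β ∈ S, α + β ∈ S) {α s : I → ℤ} (hα : α ∈ sgK0 S)
    (hs : s ∈ S) : α + s ∈ sgK0 S :=
  mem_sgK0_iff.2 fun σ hσ => by
    rw [← add_assoc, add_right_comm]
    exact mem_sgK0_iff.1 hα _ (hadd σ hσ s hs)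

lemma one_le_of_isLocalSg (hpos : ∀ σ ∈ S, 0 ≤ σ) (hloc : IsLocalSg S) {w : I → ℤ} (hw : w ∈ S)
    (hw0 : w ≠ 0) (i : I) : 1 ≤ w i := by
  have hwi : 0 ≤ w i := hpos w hw i
  by_contra h
  exact hw0 (hloc w hw ⟨i, by omega⟩)

variable [Fintype I]

lemma exists_isLeast_of_infClosed {X : Set (I → ℤ)} (hX : InfClosed X) (hne : X.Nonempty)
    (hbdd : BddBelow X) : ∃ a, IsLeast X a := by
  classical
  obtain ⟨b, hb⟩ := hbdd
  have hmin : ∀ i, ∃ m, (∃ x ∈ X, x i = m) ∧ ∀ z, (∃ x ∈ X, x i = z) → m ≤ z := fun i =>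
    let ⟨x, hx⟩ := hne
    Int.exists_least_of_bdd ⟨b i, by rintro _ ⟨x, hx, rfl⟩; exact hb hx i⟩ ⟨x i, x, hx, rfl⟩
  choose m hmX hmle using hmin
  choose x hxX hxm using hmX
  have hattain : ∀ F : Finset I, ∃ y ∈ X, ∀ i ∈ F, y i = m i := by
    intro F
    induction F using Finset.induction with
    | empty => exact hne.imp fun y hy => ⟨hy, by simp⟩
    | insert a F _ ih =>
      obtain ⟨y, hyX, hy⟩ := ih
      refine ⟨y ⊓ x a, hX hyX (hxX a), fun i hi => ?_⟩
      have hya := hmle a _ ⟨y, hyX, rfl⟩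
      have hxai := hmle i _ ⟨x a, hxX a, rfl⟩
      rcases Finset.mem_insert.1 hi with rfl | hi
      · simp [hxm, hya]
      · simp [hy i hi, hxai]
  obtain ⟨y, hyX, hy⟩ := hattain Finset.univ
  exact ⟨y, hyX, fun z hz i => (hy i (Finset.mem_univ i)).symm ▸ hmle i _ ⟨z, hz, rfl⟩⟩

lemma exists_le_eqOn_sgDelta_inter_eq_empty (hpos : ∀ σ ∈ S, 0 ≤ σ) (hE2 : propE2 S)
    (D : Set I) (c : I → ℤ) (hc : ∀ k ∈ D, sgDeltaAt k c ∩ S = ∅) :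
    ∃ x ≤ c, Set.EqOn x c D ∧ sgDelta x ∩ S = ∅ := by
  classical
  induction hn : ∑ u, (c u + 1).toNat using Nat.strong_induction_on generalizing c with
  | _ n ih =>
  by_cases hfree : sgDelta c ∩ S = ∅
  · exact ⟨c, le_rfl, Set.eqOn_refl _ _, hfree⟩
  obtain ⟨p, hpΔ, hpS⟩ := Set.nonempty_iff_ne_empty.2 hfree
  obtain ⟨k', hp⟩ := mem_sgDelta_iff.1 hpΔ
  have hk' : k' ∉ D := fun hk' => Set.eq_empty_iff_forall_notMem.1 (hc k' hk') p ⟨hp, hpS⟩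
  have hck' : 0 ≤ c k' := hp.1 ▸ hpos p hpS k'
  have hc'c : update c k' (c k' - 1) ≤ c := fun w => by
    by_cases hw : w = k'
    · subst hw; simp
    · simp [hw]
  have hlt : ∑ u, (update c k' (c k' - 1) u + 1).toNat < n := by
    rw [← hn]
    refine Finset.sum_lt_sum (fun w _ => ?_) ⟨k', Finset.mem_univ _, by rw [update_self]; omega⟩
    have hw : update c k' (c k' - 1) w ≤ c w := hc'c w
    omega
  obtain ⟨x, hxc', hxD, hx⟩ := ih _ hlt (update c k' (c k' - 1))
    (fun k hk => sgDeltaAt_update_inter_eq_empty hE2 hp hpS (ne_of_mem_of_not_mem hk hk')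
      (hc k hk)) rfl
  exact ⟨x, hxc'.trans hc'c,
    fun i hi => (hxD hi).trans (update_of_ne (ne_of_mem_of_not_mem hi hk') _ _), hx⟩

/-- (E2) for the set of points `x` with `Δ(x) ∩ S = ∅`, with `max` in place of `min`. -/
lemma exists_sgDelta_inter_eq_empty_lt (hpos : ∀ σ ∈ S, 0 ≤ σ) (hE2 : propE2 S)
    {x y : I → ℤ} (hx : sgDelta x ∩ S = ∅) (hy : sgDelta y ∩ S = ∅) {j : I} (hj : x j = y j) :
    ∃ z, sgDelta z ∩ S = ∅ ∧ z j < x j ∧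
      ∀ i, z i ≤ max (x i) (y i) ∧ (x i ≠ y i → z i = max (x i) (y i)) := by
  classical
  have hxy := sgDelta_sup_inter_eq_empty hx hy
  have hfree : ∀ {w t : I → ℤ} {i : I}, sgDelta w ∩ S = ∅ → t ∈ sgDeltaAt i w → t ∉ S :=
    fun hw ht htS => Set.eq_empty_iff_forall_notMem.1 hw _ ⟨mem_sgDelta_iff.2 ⟨_, ht⟩, htS⟩
  have hc : ∀ k ∈ {i | x i ≠ y i}, sgDeltaAt k (update (x ⊔ y) j (x j - 1)) ∩ S = ∅ := by
    intro k hk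
    refine Set.eq_empty_of_forall_notMem fun t ⟨ht, htS⟩ => ?_
    rcases lt_or_gt_of_ne hk with hlt | hlt
    · rcases mem_sgDeltaAt_of_mem_sgDeltaAt_update hj hlt ht with h | h
      exacts [hfree hxy h htS, hfree hx h htS]
    · rw [sup_comm, hj] at ht
      rcases mem_sgDeltaAt_of_mem_sgDeltaAt_update hj.symm hlt ht with h | h
      · rw [sup_comm] at h; exact hfree hxy h htS
      · exact hfree hy h htS
  obtain ⟨z, hzc, hzD, hz⟩ := exists_le_eqOn_sgDelta_inter_eq_empty hpos hE2 _ _ hc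
  refine ⟨z, hz, ?_, fun i => ⟨?_, fun hi => ?_⟩⟩
  · simpa using hzc j
  · have hzi : z i ≤ update (x ⊔ y) j (x j - 1) i := hzc i
    by_cases hij : i = j
    · subst hij; rw [update_self] at hzi; omega
    · simpa [hij] using hzi
  · have hij : i ≠ j := by rintro rfl; exact hi hj
    simpa [hij] using hzD hi

section Conductor

variable (hS : IsGoodSemigroup S)
include hS

lemma isLeast_sgGamma : IsLeast (sgCond S) (sgGamma S) := by
  obtain ⟨-, -, hpos, ⟨a, ha⟩, hE1, -⟩ := hS
  have hinf : InfClosed (sgCond S) := fun x hx y hy => mem_sgCond_iff.2 fun δ hδ => by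
    have hmem : (δ ⊔ x) ⊓ (δ ⊔ y) ∈ S :=
      hE1 _ (mem_sgCond_iff.1 hx _ le_sup_right) _ (mem_sgCond_iff.1 hy _ le_sup_right)
    rwa [← sup_inf_left, sup_eq_left.2 hδ] at hmem
  have hbdd : BddBelow (sgCond S) := ⟨0, fun α hα => hpos α (mem_sgCond_iff.1 hα α le_rfl)⟩
  obtain ⟨g, hg⟩ := exists_isLeast_of_infClosed hinf ⟨a, mem_sgCond_iff.2 ha⟩ hbdd
  rwa [sgGamma, sgMu_eq_of_isLeast hg]

lemma mem_of_sgGamma_le {δ : I → ℤ} (h : sgGamma S ≤ δ) : δ ∈ S :=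
  mem_sgCond_iff.1 (isLeast_sgGamma hS).1 δ h

lemma sgGamma_mem : sgGamma S ∈ S :=
  mem_of_sgGamma_le hS le_rfl

lemma update_add_one_mem [DecidableEq I] {δ : I → ℤ} (hδ : δ ∈ S) {u : I}
    (hu : sgGamma S u ≤ δ u) : update δ u (δ u + 1) ∈ S := by
  obtain ⟨q, ⟨hqu, hq⟩, hγq⟩ := exists_mem_sgDeltaAt_ge δ (sgGamma S) hu
  obtain ⟨ε, hεS, hεu, hε⟩ := hS.2.2.2.2.2 δ hδ q (mem_of_sgGamma_le hS hγq) u hqu.symm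
  obtain ⟨d, ⟨hdu, hd⟩, hγd⟩ :=
    exists_mem_sgDeltaAt_ge (update δ u (δ u + 1)) (sgGamma S) (i := u) (by rw [update_self]; omega)
  have hmin : ε ⊓ d ∈ S := hS.2.2.2.2.1 ε hεS d (mem_of_sgGamma_le hS hγd)
  convert hmin using 1
  funext w
  by_cases hw : w = u
  · subst hw
    simp only [update_self] at hdu ⊢
    simp only [Pi.inf_apply, hdu]
    omega
  · have hqw := hq w hw
    have hεw := (hε w).2 hqw.ne
    have hdw := hd w hw
    simp only [update_of_ne hw, Pi.inf_apply] at hdw ⊢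
    omega

/-- Coordinates at or above the conductor can be raised freely within `S`. -/
lemma mem_of_le_of_forall_eq_or_sgGamma_le {δ β : I → ℤ} (hδ : δ ∈ S) (hle : δ ≤ β)
    (h : ∀ u, β u = δ u ∨ sgGamma S u ≤ δ u) : β ∈ S := by
  classical
  induction hn : ∑ u, (β u - δ u).toNat using Nat.strong_induction_on generalizing δ with
  | _ n ih =>
  by_cases heq : δ = β
  · rwa [← heq]
  obtain ⟨u, hu⟩ := Function.ne_iff.1 heq
  have hγu : sgGamma S u ≤ δ u := (h u).resolve_left (Ne.symm hu)
  have hlt : δ u < β u := lt_of_le_of_ne (hle u) hu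
  refine ih _ ?_ (update_add_one_mem hS hδ hγu) (fun w => ?_) (fun w => ?_) rfl
  · rw [← hn]
    refine Finset.sum_lt_sum (fun w _ => ?_) ⟨u, Finset.mem_univ _, by rw [update_self]; omega⟩
    by_cases hw : w = u
    · subst hw; rw [update_self]; omega
    · simp [hw]
  · show update δ u (δ u + 1) w ≤ β w
    by_cases hw : w = u
    · subst hw; rw [update_self]; omega
    · simpa [hw] using hle w
  · by_cases hw : w = u
    · subst hw; rw [update_self]; omega
    · simpa [hw] using h w

lemma notMem_sgDelta_sgTau {σ : I → ℤ} (hσ : σ ∈ S) : σ ∉ sgDelta (sgTau S) := by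
  intro hΔ
  obtain ⟨i, hi, hgt⟩ := mem_sgDelta_iff.1 hΔ
  have hgt' : ∀ u, u ≠ i → sgGamma S u ≤ σ u := fun u hu => by
    have := hgt u hu; rw [sgTau_apply] at this; omega
  -- `σ + ℕ^I ⊆ S`, against the minimality of the conductor at `i`
  have hcond : σ ∈ sgCond S := mem_sgCond_iff.2 fun δ hδ => by
    by_cases hδi : sgGamma S i ≤ δ i
    · refine mem_of_sgGamma_le hS fun u => ?_
      by_cases hu : u = i
      · exact hu ▸ hδi
      · exact (hgt' u hu).trans (hδ u)
    · refine mem_of_le_of_forall_eq_or_sgGamma_le hS hσ hδ fun u => ?_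
      by_cases hu : u = i
      · subst hu
        rw [sgTau_apply] at hi
        have hσδ : σ u ≤ δ u := hδ u
        left
        omega
      · exact Or.inr (hgt' u hu)
  have hγσ : sgGamma S i ≤ σ i := (isLeast_sgGamma hS).2 hcond i
  rw [sgTau_apply] at hi
  omega

lemma sgGamma_ne_zero (hne : S ≠ {β | 0 ≤ β}) : sgGamma S ≠ 0 := by
  intro h
  refine hne (Set.ext fun β => ⟨hS.2.2.1 β, fun hβ => mem_of_sgGamma_le hS ?_⟩)
  rw [h]; exact hβ

end Conductor

section CanonicalIdeal

variable (hS : IsGoodSemigroup S)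
include hS

lemma subset_sgK0 : S ⊆ sgK0 S := fun α hα =>
  mem_sgK0_iff.2 fun σ hσ => notMem_sgDelta_sgTau hS (hS.2.1 σ hσ α hα)

lemma nonneg_of_mem_sgK0 {α : I → ℤ} (hα : α ∈ sgK0 S) : 0 ≤ α := fun i => by
  by_contra! hi
  obtain ⟨σ, hσ, hγσ⟩ := exists_mem_sgDeltaAt_ge (sgTau S - α) (sgGamma S) (i := i)
    (by simp only [Pi.sub_apply, sgTau_apply, Pi.zero_apply] at hi ⊢; omega)
  exact Set.eq_empty_iff_forall_notMem.1 hα σ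
    ⟨mem_sgDelta_iff.2 ⟨i, hσ⟩, mem_of_sgGamma_le hS hγσ⟩

lemma propE2_sgK0 : propE2 (sgK0 S) := by
  intro α hα β hβ j hj
  obtain ⟨z, hz, hzj, hzle⟩ := exists_sgDelta_inter_eq_empty_lt hS.2.2.1 hS.2.2.2.2.2 hα hβ
    (j := j) (by simp [hj])
  refine ⟨sgTau S - z, by simpa [sgK0] using hz, by simp only [Pi.sub_apply] at hzj ⊢; omega, fun i => ?_⟩
  have := hzle i
  simp only [Pi.sub_apply, ne_eq, sub_right_inj] at this ⊢
  omega

lemma sgCond_sgK0 : sgCond (sgK0 S) = sgCond S := by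
  refine Set.Subset.antisymm (fun α hα => ?_)
    (fun α hα => mem_sgCond_iff.2 fun δ hδ => subset_sgK0 hS (mem_sgCond_iff.1 hα δ hδ))
  suffices hγα : sgGamma S ≤ α from
    mem_sgCond_iff.2 fun δ hδ => mem_of_sgGamma_le hS (hγα.trans hδ)
  intro i
  by_contra! hi : α i < sgGamma S i
  obtain ⟨σ, hσ, hασ⟩ :=
    exists_mem_sgDeltaAt_ge (sgTau S) α (i := i) (by rw [sgTau_apply]; omega)
  exact mem_sgK0_iff.1 (mem_sgCond_iff.1 hα σ hασ) 0 hS.1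
    (by rw [zero_add]; exact mem_sgDelta_iff.2 ⟨i, hσ⟩)

lemma isGoodIdeal_sgK0 : IsGoodIdeal S (sgK0 S) := by
  refine ⟨⟨⟨0, subset_sgK0 hS hS.1⟩, fun _ hα _ hs => add_mem_sgK0 hS.2.1 hα hs, ?_⟩,
    propE1_sgK0, propE2_sgK0 hS⟩
  exact ⟨sgGamma S, sgGamma_mem hS, fun β hβ =>
    mem_of_sgGamma_le hS (le_add_of_nonneg_right (nonneg_of_mem_sgK0 hS hβ))⟩

end CanonicalIdeal

section MaximalIdeal

variable (hS : IsGoodSemigroup S)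
include hS

lemma sgDiff_subset_union (hK : sgK0 S = S) :
    sgDiff (S \ {0}) (S \ {0}) ⊆ S ∪ sgDelta (sgTau S) := by
  intro α hα
  by_cases hαS : α ∈ S
  · exact Or.inl hαS
  obtain ⟨σ, hσS, hσ⟩ : ∃ σ ∈ S, σ + α ∈ sgDelta (sgTau S) := by
    by_contra! h
    exact hαS (hK ▸ mem_sgK0_iff.2 h)
  by_cases hσ0 : σ = 0
  · right; simpa [hσ0] using hσ
  · rw [add_comm] at hσ
    exact absurd hσ (notMem_sgDelta_sgTau hS (hα σ ⟨hσS, hσ0⟩).1)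

lemma union_subset_sgDiff (hloc : IsLocalSg S) (hγ : sgGamma S ≠ 0) :
    S ∪ sgDelta (sgTau S) ⊆ sgDiff (S \ {0}) (S \ {0}) := by
  rintro α hα w ⟨hwS, hw0⟩
  have hw1 := one_le_of_isLocalSg hS.2.2.1 hloc hwS hw0
  rcases hα with hαS | hαΔ
  · refine ⟨hS.2.1 α hαS w hwS, fun h => ?_⟩
    obtain ⟨i, -⟩ := Function.ne_iff.1 hw0
    have hαi : 0 ≤ α i := hS.2.2.1 α hαS i
    have hsum : α i + w i = 0 := congrFun (Set.mem_singleton_iff.1 h) i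
    linarith [hw1 i]
  · obtain ⟨i, hi, hgt⟩ := mem_sgDelta_iff.1 hαΔ
    have hge : sgGamma S ≤ α + w := fun u => by
      show sgGamma S u ≤ α u + w u
      have := hw1 u
      by_cases hu : u = i
      · subst hu; rw [sgTau_apply] at hi; omega
      · have h := hgt u hu; rw [sgTau_apply] at h; omega
    refine ⟨mem_of_sgGamma_le hS hge, fun h => ?_⟩
    have hγi := one_le_of_isLocalSg hS.2.2.1 hloc (sgGamma_mem hS) hγ i
    have hgei : sgGamma S i ≤ α i + w i := hge i
    have hsum : α i + w i = 0 := congrFun (Set.mem_singleton_iff.1 h) i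
    omega

end MaximalIdeal

lemma sgK0_eq_self (hS : IsSymmetricSg S) : sgK0 S = S :=
  hS.2.2 _ (isGoodIdeal_sgK0 hS.1) (congrArg sgMu (sgCond_sgK0 hS.1)) (subset_sgK0 hS.1)

end Development

theorem stmt_8_general {I : Type*} [Fintype I] (S : Set (I → ℤ))
    (hS : IsSymmetricSg S) (hloc : IsLocalSg S)
    (hne : S ≠ {β | 0 ≤ β}) :
    sgDiff (S \ {0}) (S \ {0}) = S ∪ sgDelta (sgTau S) :=
  (sgDiff_subset_union hS.1 (sgK0_eq_self hS)).antisymm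
    (union_subset_sgDiff hS.1 hloc (sgGamma_ne_zero hS.1 hne))

/-- **Lemma.** Let `S` be a local symmetric good semigroup with maximal ideal
`M_S = S \ {0}`. If `S ≠ ℕ^I`, then `M_S − M_S = S ∪ Δ(τ_S)`. -/
theorem stmt_8 {I : Type*} [Fintype I] [Nonempty I] (S : Set (I → ℤ))
    (hS : IsSymmetricSg S) (hloc : IsLocalSg S)
    (hne : S ≠ {β | 0 ≤ β}) :
    sgDiff (S \ {0}) (S \ {0}) = S ∪ sgDelta (sgTau S) :=
  stmt_8_general S hS hloc hne
end

section
/- Let S be a numerical symmetric semigroup (a symmetric good semigroup with |I| = 1) with maximal ideal M_S = S ∖ {0}. If M_S − M_S is symmetric, then S = {2a + (n+1)b : a, b ∈ ℕ} for some even n ∈ ℕ. -/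
/-! With one branch everything lives in `ℤ`. There a good semigroup `S` with Frobenius number
`F` is symmetric exactly when `x ∈ S ↔ F - x ∉ S`: the set `{x | F - x ∉ S}` is a good ideal
containing `S` with the same conductor, so it equals `S` by maximality.

If `1 ∉ S`, then `M_S − M_S = S ∪ {F}`, and its Frobenius number is `F - e` for the
multiplicity `e`. Comparing the symmetries of `S` and `S ∪ {F}` shows that adding `e` maps gaps
other than `F` to gaps, so every positive gap is congruent to `F` modulo `e`. As `1` and `2` are
not congruent modulo `e ≥ 3`, we get `2 ∈ S`, and a symmetric semigroup containing `2` is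
`⟨2, F + 2⟩` with `F` odd. -/

/-- A numerical semigroup, symmetric with respect to `F`; `mem_iff` forces `F` to be its
Frobenius number and `S` to be cofinite in `ℕ`. -/
structure IsSymmetricNumericalSemigroup (S : Set ℤ) (F : ℤ) : Prop where
  zero_mem : (0 : ℤ) ∈ S
  add_mem {a b : ℤ} : a ∈ S → b ∈ S → a + b ∈ S
  nonneg {a : ℤ} : a ∈ S → 0 ≤ a
  mem_iff (x : ℤ) : x ∈ S ↔ F - x ∉ S

namespace IsSymmetricNumericalSemigroup

variable {S : Set ℤ} {F : ℤ}

lemma frobenius_notMem (hS : IsSymmetricNumericalSemigroup S F) : F ∉ S := by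
  simpa [hS.mem_iff F] using hS.zero_mem

lemma mem_of_frobenius_lt (hS : IsSymmetricNumericalSemigroup S F) {m : ℤ} (hm : F < m) :
    m ∈ S :=
  (hS.mem_iff m).2 fun h => by linarith [hS.nonneg h]

lemma natCast_mul_mem (hS : IsSymmetricNumericalSemigroup S F) {a : ℤ} (ha : a ∈ S) (k : ℕ) :
    k * a ∈ S := by
  induction k with
  | zero => simpa using hS.zero_mem
  | succ k ih => simpa [add_mul] using hS.add_mem ih ha

lemma sub_mem_of_notMem (hS : IsSymmetricNumericalSemigroup S F) {x : ℤ} (hx : x ∉ S) :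
    F - x ∈ S :=
  not_not.1 (mt (hS.mem_iff x).2 hx)

lemma frobenius_eq (hS : IsSymmetricNumericalSemigroup S F) {c : ℤ} (hc : c ∉ S)
    (hgt : ∀ m, c < m → m ∈ S) : F = c := by
  have hFc : F ≤ c := not_lt.1 fun h => hS.frobenius_notMem (hgt F h)
  have hcF : c ≤ F := by linarith [hS.nonneg (hS.sub_mem_of_notMem hc)]
  omega

lemma setOf_add_mem_maxIdeal_eq (hS : IsSymmetricNumericalSemigroup S F) (hF : 0 ≤ F) :
    {x | ∀ m ∈ S \ {0}, x + m ∈ S \ {0}} = insert F S := by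
  ext x
  simp only [Set.mem_ofPred_eq, Set.mem_sdiff, Set.mem_singleton_iff, Set.mem_insert_iff]
  constructor
  · intro h
    by_contra! hx
    have := (h (F - x) ⟨hS.sub_mem_of_notMem hx.2, sub_ne_zero.2 hx.1.symm⟩).1
    exact hS.frobenius_notMem (by simpa using this)
  · rintro (rfl | hx) m ⟨hm, hm0⟩ <;> have := hS.nonneg hm
    · exact ⟨hS.mem_of_frobenius_lt (by omega), by omega⟩
    · exact ⟨hS.add_mem hx hm, by have := hS.nonneg hx; omega⟩

lemma exists_multiplicity (hS : IsSymmetricNumericalSemigroup S F) :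
    ∃ e ∈ S, 0 < e ∧ ∀ y, 0 < y → y ∈ S → e ≤ y := by
  obtain ⟨e, ⟨he, heS⟩, hmin⟩ := Int.exists_least_of_bdd (P := fun y => 0 < y ∧ y ∈ S)
    ⟨0, fun z hz => hz.1.le⟩ ⟨|F| + 1, by positivity, hS.mem_of_frobenius_lt (by
      linarith [le_abs_self F])⟩
  exact ⟨e, heS, he, fun y hy hyS => hmin y ⟨hy, hyS⟩⟩

section Multiplicity

variable {G e : ℤ}

lemma frobenius_insert_eq (hS : IsSymmetricNumericalSemigroup S F)
    (hT : IsSymmetricNumericalSemigroup (insert F S) G) (he : 0 < e) (heS : e ∈ S)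
    (hmin : ∀ y, 0 < y → y ∈ S → e ≤ y) : G = F - e := by
  refine hT.frobenius_eq ?_ fun m hm => ?_
  · rintro (h | h)
    · omega
    · exact (hS.mem_iff e).1 heS (by simpa using h)
  · rcases lt_trichotomy m F with hmF | rfl | hmF
    · refine Or.inr ((hS.mem_iff m).2 fun h => ?_)
      have := hmin _ (by omega) h
      omega
    · exact Or.inl rfl
    · exact Or.inr (hS.mem_of_frobenius_lt hmF)

lemma add_notMem_of_notMem (hS : IsSymmetricNumericalSemigroup S F)
    (hT : IsSymmetricNumericalSemigroup (insert F S) (F - e)) {x : ℤ} (hx : x ∉ S)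
    (hxF : x ≠ F) (hxe : x ≠ -e) : x + e ∉ S := by
  intro h
  have hgap : F - e - x ∉ insert F S := by
    rintro (h' | h')
    · omega
    · exact (hS.mem_iff (x + e)).1 h (by rwa [show F - (x + e) = F - e - x by ring])
  rcases (hT.mem_iff x).2 hgap with h' | h'
  · exact hxF h'
  · exact hx h'

lemma exists_add_mul_eq_frobenius (hS : IsSymmetricNumericalSemigroup S F) (he : 0 < e)
    (hstep : ∀ x, 0 < x → x ∉ S → x ≠ F → x + e ∉ S) {x : ℤ} (hx0 : 0 < x) (hx : x ∉ S) :
    ∃ k : ℕ, x + k * e = F := by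
  suffices ∀ n : ℕ, ∀ x, 0 < x → x ∉ S → F - x ≤ n → ∃ k : ℕ, x + k * e = F from
    this (F - x).toNat x hx0 hx (Int.self_le_toNat _)
  intro n
  induction n with
  | zero =>
    intro x _ hx hn
    have : x ≤ F := not_lt.1 fun h => hx (hS.mem_of_frobenius_lt h)
    exact ⟨0, by push_cast at hn; omega⟩
  | succ n ih =>
    intro x hx0 hx hn
    by_cases hxF : x = F
    · exact ⟨0, by simp [hxF]⟩
    obtain ⟨k, hk⟩ := ih (x + e) (by omega) (hstep x hx0 hx hxF) (by push_cast at hn ⊢; omega)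
    exact ⟨k + 1, by push_cast; linarith⟩

lemma two_mem_of_isSymmetric_setOf_add_mem_maxIdeal (hS : IsSymmetricNumericalSemigroup S F)
    (hT : IsSymmetricNumericalSemigroup {x | ∀ m ∈ S \ {0}, x + m ∈ S \ {0}} G) :
    (2 : ℤ) ∈ S := by
  by_cases h1 : (1 : ℤ) ∈ S
  · simpa using hS.add_mem h1 h1
  have hF : 1 ≤ F := by linarith [hS.nonneg (hS.sub_mem_of_notMem h1)]
  rw [hS.setOf_add_mem_maxIdeal_eq (by omega)] at hT
  obtain ⟨e, heS, he, hmin⟩ := hS.exists_multiplicity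
  obtain rfl := frobenius_insert_eq hS hT he heS hmin
  have hgap : ∀ x, 0 < x → x ∉ S → ∃ k : ℕ, x + k * e = F := fun x hx0 hx =>
    hS.exists_add_mul_eq_frobenius he
      (fun y hy0 hy hyF => add_notMem_of_notMem hS hT hy hyF (by omega)) hx0 hx
  by_contra h2
  have he3 : 3 ≤ e := by
    have : e ≠ 1 := by rintro rfl; exact h1 heS
    have : e ≠ 2 := by rintro rfl; exact h2 heS
    omega
  obtain ⟨k₁, hk₁⟩ := hgap 1 one_pos h1
  obtain ⟨k₂, hk₂⟩ := hgap 2 two_pos h2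
  have : e ∣ 1 := ⟨k₁ - k₂, by linear_combination hk₂ - hk₁⟩
  linarith [Int.le_of_dvd one_pos this]

end Multiplicity

lemma odd_frobenius (hS : IsSymmetricNumericalSemigroup S F) : Odd F := by
  rw [← Int.not_even_iff_odd]
  rintro ⟨c, rfl⟩
  simpa using hS.mem_iff c

lemma eq_setOf_two_mul_add (hS : IsSymmetricNumericalSemigroup S F) (h2 : (2 : ℤ) ∈ S) :
    S = {x | ∃ a b : ℕ, x = 2 * a + (F + 2) * b} := by
  obtain ⟨d, rfl⟩ := hS.odd_frobenius
  ext x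
  constructor
  · intro hx
    have hx0 := hS.nonneg hx
    obtain ⟨c, rfl | rfl⟩ := Int.even_or_odd' x
    · exact ⟨c.toNat, 0, by omega⟩
    -- an odd `x ≤ F` is a gap, since `F - x` is a nonnegative even number
    have hdc : d < c := by
      by_contra! hcd
      have := hS.natCast_mul_mem h2 (d - c).toNat
      rw [show ((d - c).toNat : ℤ) * 2 = 2 * d + 1 - (2 * c + 1) by omega] at this
      exact (hS.mem_iff _).1 hx this
    exact ⟨(c - d - 1).toNat, 1, by omega⟩
  · rintro ⟨a, b, rfl⟩
    have hF2 : 2 * d + 1 + 2 ∈ S := hS.mem_of_frobenius_lt (by omega)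
    exact hS.add_mem (by simpa [mul_comm] using hS.natCast_mul_mem h2 a)
      (by simpa [mul_comm] using hS.natCast_mul_mem hF2 b)

end IsSymmetricNumericalSemigroup

namespace Function

lemma const_surjective {α β : Type*} [Subsingleton α] [Nonempty α] :
    Surjective (const α : β → α → β) := fun f =>
  ⟨f (Classical.arbitrary α), funext fun _ => congrArg f (Subsingleton.elim _ _)⟩

end Function

section OneBranch

open Function

variable {I : Type*}

/-- With one branch, `τ_S = F` and `Δ(α) = {α}`, so this is the normalized canonical ideal
`K_S^0`. -/
def frobeniusDual (X : Set (I → ℤ)) (F : ℤ) : Set (I → ℤ) :=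
  {α | const I F - α ∉ X}

variable {X : Set (I → ℤ)} {F : ℤ}

lemma const_mem_frobeniusDual {x : ℤ} : const I x ∈ frobeniusDual X F ↔ const I (F - x) ∉ X := by
  simp [frobeniusDual]

lemma subset_frobeniusDual (hX : IsGoodSemigroup X) (hF : const I F ∉ X) :
    X ⊆ frobeniusDual X F := fun α hα h => hF (by simpa using hX.2.1 _ h _ hα)

variable [Nonempty I]

lemma preimage_const_diff_zero (E : Set (I → ℤ)) :
    const I ⁻¹' (E \ {0}) = const I ⁻¹' E \ {0} := by
  ext x
  simp [const_injective.eq_iff' const_zero]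

variable [Subsingleton I]

lemma propE1_of_subsingleton (E : Set (I → ℤ)) : propE1 E := by
  intro α hα β hβ
  obtain ⟨a, rfl⟩ := const_surjective α
  obtain ⟨b, rfl⟩ := const_surjective β
  rcases min_choice a b with h | h
  · simp only [const_apply, h]
    exact hα
  · simp only [const_apply, h]
    exact hβ

lemma propE2_of_subsingleton {E : Set (I → ℤ)} (hE : propE0 E) : propE2 E := by
  intro α _ β _ j hj
  obtain ⟨γ, hγ⟩ := hE
  obtain ⟨a, rfl⟩ := const_surjective α
  obtain ⟨b, rfl⟩ := const_surjective β
  obtain ⟨c, rfl⟩ := const_surjective γ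
  obtain rfl : a = b := hj
  refine ⟨const I (max (a + 1) c), hγ _ (const_le_const.2 (le_max_right _ _)), ?_,
    fun i => ⟨?_, fun h => (h rfl).elim⟩⟩
  · exact lt_of_lt_of_le (lt_add_one a) (le_max_left _ _)
  · exact (min_self a).trans_le ((le_add_of_nonneg_right zero_le_one).trans (le_max_left _ _))

lemma sgCond_eq_image_Ioi {E : Set (I → ℤ)} (hF : const I F ∉ E)
    (hgt : ∀ m, F < m → const I m ∈ E) : sgCond E = const I '' Set.Ioi F := by
  ext α
  obtain ⟨x, rfl⟩ := const_surjective α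
  rw [const_injective.mem_set_image, Set.mem_Ioi]
  constructor
  · intro h
    by_contra! hxF
    have := h (const I (F - x)) (const_nonneg.2 (by omega))
    rw [const_add, add_sub_cancel] at this
    exact hF this
  · intro hx β hβ
    obtain ⟨b, rfl⟩ := const_surjective β
    rw [const_add]
    exact hgt _ (by linarith [const_nonneg.1 hβ])

lemma preimage_const_sgDiff (E₁ E₂ : Set (I → ℤ)) :
    const I ⁻¹' sgDiff E₁ E₂ = {x | ∀ y ∈ const I ⁻¹' E₂, x + y ∈ const I ⁻¹' E₁} := by
  ext x
  simp only [sgDiff, Set.mem_preimage, Set.mem_ofPred_eq, const_surjective.forall, const_add]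

lemma IsGoodSemigroup.exists_frobenius (hX : IsGoodSemigroup X) :
    ∃ F, const I F ∉ X ∧ ∀ m, F < m → const I m ∈ X := by
  obtain ⟨-, -, hpos, ⟨γ, hγ⟩, -, -⟩ := hX
  obtain ⟨c, rfl⟩ := const_surjective γ
  obtain ⟨F, hF, hmax⟩ := Int.exists_greatest_of_bdd (P := fun x => const I x ∉ X)
    ⟨c, fun z hz => not_lt.1 fun h => hz (hγ _ (const_le_const.2 h.le))⟩
    ⟨-1, fun h => by simpa using const_nonneg.1 (hpos _ h)⟩
  exact ⟨F, hF, fun m hm => not_not.1 fun h => (hmax m h).not_gt hm⟩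

lemma frobeniusDual_isGoodIdeal (hX : IsGoodSemigroup X) (hF : const I F ∉ X)
    (hgt : ∀ m, F < m → const I m ∈ X) : IsGoodIdeal X (frobeniusDual X F) := by
  obtain ⟨h0, hadd, hpos, -⟩ := hX
  have hnonneg {b : ℤ} (hb : const I b ∈ frobeniusDual X F) : 0 ≤ b := by
    by_contra! h
    exact const_mem_frobeniusDual.1 hb (hgt _ (by omega))
  refine ⟨⟨⟨0, by simpa [frobeniusDual] using hF⟩, fun α hα β hβ h => hα ?_,
    ⟨const I (F + 1), hgt _ (lt_add_one F), fun β hβ => ?_⟩⟩, propE1_of_subsingleton _,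
    propE2_of_subsingleton ⟨const I (F + 1), fun β hβ => ?_⟩⟩
  · simpa [sub_add_eq_sub_sub] using hadd _ h _ hβ
  · obtain ⟨b, rfl⟩ := const_surjective β
    rw [const_add]
    exact hgt _ (by linarith [hnonneg hβ])
  · obtain ⟨b, rfl⟩ := const_surjective β
    refine const_mem_frobeniusDual.2 fun h => ?_
    linarith [const_nonneg.1 (hpos _ h), const_le_const.1 hβ]

lemma sgGamma_frobeniusDual (hX : IsGoodSemigroup X) (hF : const I F ∉ X)
    (hgt : ∀ m, F < m → const I m ∈ X) : sgGamma (frobeniusDual X F) = sgGamma X := by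
  unfold sgGamma
  rw [sgCond_eq_image_Ioi hF hgt, sgCond_eq_image_Ioi (F := F)]
  · simpa [const_mem_frobeniusDual] using hX.1
  · refine fun m hm => const_mem_frobeniusDual.2 fun h => ?_
    linarith [const_nonneg.1 (hX.2.2.1 _ h)]

lemma IsSymmetricSg.exists_isSymmetricNumericalSemigroup_preimage (hX : IsSymmetricSg X) :
    ∃ F, IsSymmetricNumericalSemigroup (const I ⁻¹' X) F := by
  obtain ⟨F, hF, hgt⟩ := hX.1.exists_frobenius
  have hKX : frobeniusDual X F = X := hX.2.2 _ (frobeniusDual_isGoodIdeal hX.1 hF hgt)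
    (sgGamma_frobeniusDual hX.1 hF hgt) (subset_frobeniusDual hX.1 hF)
  obtain ⟨h0, hadd, hpos, -⟩ := hX.1
  refine ⟨F, ⟨by simpa using h0, fun ha hb => by simpa using hadd _ ha _ hb,
    fun ha => const_nonneg.1 (hpos _ ha), fun x => ?_⟩⟩
  rw [Set.mem_preimage, Set.mem_preimage, ← const_mem_frobeniusDual, hKX]

end OneBranch

/-- **Proposition.** Let `S` be a numerical symmetric semigroup (`|I| = 1`)
with maximal ideal `M_S = S \ {0}`. If `M_S − M_S` is symmetric, then
`S = ⟨2, n+1⟩ = {2a + (n+1)b : a, b ∈ ℕ}` for some even `n ∈ ℕ`. -/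
theorem stmt_9 {I : Type*} [Fintype I] [Nonempty I] (hcard : Fintype.card I = 1)
    (S : Set (I → ℤ)) (hS : IsSymmetricSg S)
    (hMM : IsSymmetricSg (sgDiff (S \ {0}) (S \ {0}))) :
    ∃ n : ℕ, Even n ∧
      S = {α | ∃ a b : ℕ, α = fun _ => 2 * (a : ℤ) + ((n : ℤ) + 1) * (b : ℤ)} := by
  have : Subsingleton I := Fintype.card_le_one_iff_subsingleton.mp hcard.le
  obtain ⟨F, hS'⟩ := hS.exists_isSymmetricNumericalSemigroup_preimage
  obtain ⟨G, hT'⟩ := hMM.exists_isSymmetricNumericalSemigroup_preimage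
  rw [preimage_const_sgDiff, preimage_const_diff_zero] at hT'
  have h2 := hS'.two_mem_of_isSymmetric_setOf_add_mem_maxIdeal hT'
  obtain ⟨d, hd⟩ := hS'.odd_frobenius
  have hF : 0 ≤ F + 1 := hS'.nonneg (hS'.mem_of_frobenius_lt (lt_add_one F))
  refine ⟨(F + 1).toNat, ⟨(d + 1).toNat, by omega⟩, ?_⟩
  rw [← Set.image_preimage_eq S Function.const_surjective, hS'.eq_setOf_two_mul_add h2,
    show ((F + 1).toNat : ℤ) + 1 = F + 2 by omega]
  ext α
  simp only [Set.mem_image, Set.mem_ofPred_eq]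
  constructor
  · rintro ⟨_, ⟨a, b, rfl⟩, rfl⟩
    exact ⟨a, b, rfl⟩
  · rintro ⟨a, b, rfl⟩
    exact ⟨_, ⟨a, b, rfl⟩, rfl⟩
end
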